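/- arXiv:2408.10545 — 9 statements merged into one kernel-verified Lean document; each statement's English description precedes it below -/
import Mathlib

section
/- Let F be a division ring with two standard filtrations f_1 and f_2 (i.e. each is the filtration induced by a complete discrete valuation subring D_i of F with Q(D_i) = F, where f_i(x) = n iff n is maximal with x ∈ J(D_i)^n). Then f_1 and f_2 are topologically equivalent if and only if f_1 = f_2. -/
/-- `f` is a standard filtration on the division ring `F`: a complete, separated
discrete valuation `F → ℤ ∪ {∞}` (induced from a complete discrete valuation
ring `D = f⁻¹([0,∞]) ⊆ F` with quotient division ring `F` and uniformiser of
value `1`). -/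
def IsStandardFiltration {F : Type*} [DivisionRing F] (f : F → WithTop ℤ) : Prop :=
  (∀ a b : F, min (f a) (f b) ≤ f (a + b)) ∧
  (∀ a : F, f a = ⊤ ↔ a = 0) ∧
  (∀ a b : F, f (a * b) = f a + f b) ∧
  (∃ π : F, f π = 1) ∧
  -- completeness: every Cauchy sequence converges
  (∀ s : ℕ → F,
    (∀ k : ℤ, ∃ N : ℕ, ∀ m ≥ N, ∀ n ≥ N, (k : WithTop ℤ) ≤ f (s m - s n)) →
    ∃ L : F, ∀ k : ℤ, ∃ N : ℕ, ∀ n ≥ N, (k : WithTop ℤ) ≤ f (s n - L))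

section SFAux

variable {F : Type*} [DivisionRing F] {f f₁ f₂ : F → WithTop ℤ}

lemma sf_zero (h : IsStandardFiltration f) : f 0 = ⊤ := (h.2.1 0).2 rfl

lemma sf_ne_top (h : IsStandardFiltration f) {x : F} (hx : x ≠ 0) : f x ≠ ⊤ :=
  fun ht => hx ((h.2.1 x).1 ht)

lemma sf_exists (h : IsStandardFiltration f) {x : F} (hx : x ≠ 0) :
    ∃ n : ℤ, f x = (n : WithTop ℤ) := by
  obtain ⟨n, hn⟩ := WithTop.ne_top_iff_exists.mp (sf_ne_top h hx)
  exact ⟨n, hn.symm⟩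

lemma sf_one (h : IsStandardFiltration f) : f 1 = 0 := by
  obtain ⟨n, hn⟩ := sf_exists h (one_ne_zero (α := F))
  have h2 := h.2.2.1 1 1
  rw [one_mul, hn] at h2
  have h3 : n = n + n := by exact_mod_cast h2
  have h4 : n = 0 := by omega
  rw [hn, h4]
  rfl

lemma sf_inv (h : IsStandardFiltration f) {x : F} (hx : x ≠ 0) {n : ℤ}
    (hn : f x = (n : WithTop ℤ)) : f x⁻¹ = ((-n : ℤ) : WithTop ℤ) := by
  obtain ⟨m, hm⟩ := sf_exists h (inv_ne_zero hx)
  have h2 := h.2.2.1 x x⁻¹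
  rw [mul_inv_cancel₀ hx, sf_one h, hn, hm] at h2
  have h3 : (0 : ℤ) = n + m := by exact_mod_cast h2
  have h4 : m = -n := by omega
  rw [hm, h4]

lemma sf_pow (h : IsStandardFiltration f) {x : F} {n : ℤ}
    (hn : f x = (n : WithTop ℤ)) (m : ℕ) :
    f (x ^ m) = (((m : ℤ) * n : ℤ) : WithTop ℤ) := by
  induction m with
  | zero => simpa using sf_one h
  | succ k ih =>
      rw [pow_succ, h.2.2.1, ih, hn, ← WithTop.coe_add]
      congr 1
      push_cast
      ring

lemma sf_zpow (h : IsStandardFiltration f) {x : F} (hx : x ≠ 0) {n : ℤ}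
    (hn : f x = (n : WithTop ℤ)) (m : ℤ) :
    f (x ^ m) = ((m * n : ℤ) : WithTop ℤ) := by
  obtain ⟨k, rfl | rfl⟩ := Int.eq_nat_or_neg m
  · rw [zpow_natCast]
    exact sf_pow h hn k
  · rw [zpow_neg, zpow_natCast]
    rw [sf_inv h (pow_ne_zero k hx) (sf_pow h hn k)]
    congr 1
    ring

/-- If `f₁ x ≥ 1` for a nonzero `x`, and the `f₁`-topology refines the
`f₂`-topology, then `f₂ x ≥ 1`. -/
lemma sf_pos (h₁ : IsStandardFiltration f₁) (h₂ : IsStandardFiltration f₂)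
    (H : ∀ q : ℤ, ∃ p : ℤ, ∀ x : F, (p : WithTop ℤ) ≤ f₁ x → (q : WithTop ℤ) ≤ f₂ x)
    {x : F} (hx : x ≠ 0) {n₁ n₂ : ℤ} (e₁ : f₁ x = (n₁ : WithTop ℤ))
    (e₂ : f₂ x = (n₂ : WithTop ℤ)) (hpos : 1 ≤ n₁) : 1 ≤ n₂ := by
  obtain ⟨p, hp⟩ := H 1
  set m : ℕ := max p.toNat 1 with hm
  have hm1 : (1 : ℤ) ≤ (m : ℤ) := by
    have : 1 ≤ m := le_max_right _ _
    exact_mod_cast this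
  have hpm : p ≤ (m : ℤ) := by
    have h5 : p ≤ (p.toNat : ℤ) := Int.self_le_toNat p
    have h6 : (p.toNat : ℤ) ≤ (m : ℤ) := by
      have : p.toNat ≤ m := le_max_left _ _
      exact_mod_cast this
    omega
  have hle : (p : WithTop ℤ) ≤ f₁ (x ^ m) := by
    rw [sf_pow h₁ e₁ m]
    have : p ≤ (m : ℤ) * n₁ := by nlinarith
    exact_mod_cast this
  have h7 := hp _ hle
  rw [sf_pow h₂ e₂ m] at h7
  have h8 : (1 : ℤ) ≤ (m : ℤ) * n₂ := by exact_mod_cast h7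
  by_contra hcon
  push_neg at hcon
  have : n₂ ≤ 0 := by omega
  nlinarith

end SFAux

/-- Two standard filtrations on a division ring are topologically equivalent
iff they are equal. -/
theorem stmt_6 {F : Type*} [DivisionRing F] (f₁ f₂ : F → WithTop ℤ)
    (h₁ : IsStandardFiltration f₁) (h₂ : IsStandardFiltration f₂) :
    ((∀ q : ℤ, ∃ p : ℤ, ∀ x : F, (p : WithTop ℤ) ≤ f₁ x → (q : WithTop ℤ) ≤ f₂ x) ∧
     (∀ q : ℤ, ∃ p : ℤ, ∀ x : F, (p : WithTop ℤ) ≤ f₂ x → (q : WithTop ℤ) ≤ f₁ x)) ↔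
    f₁ = f₂ := by
  constructor
  · rintro ⟨H₁, H₂⟩
    -- sign agreement: if f₁ y = 0 then f₂ y = 0
    have hzero : ∀ y : F, ∀ hy : y ≠ 0, ∀ a b : ℤ, f₁ y = (a : WithTop ℤ) →
        f₂ y = (b : WithTop ℤ) → a = 0 → b = 0 := by
      intro y hy a b ea eb ha
      rcases lt_trichotomy b 0 with hb | hb | hb
      · -- f₂ y⁻¹ = -b ≥ 1 ⇒ f₁ y⁻¹ = -a ≥ 1 ⇒ a ≤ -1, contradiction
        have e₁' := sf_inv h₁ hy ea
        have e₂' := sf_inv h₂ hy eb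
        have := sf_pos h₂ h₁ H₂ (inv_ne_zero hy) e₂' e₁' (by omega)
        omega
      · exact hb
      · have := sf_pos h₂ h₁ H₂ hy eb ea (by omega)
        omega
    -- uniformizer of f₁ has f₂-value 1
    obtain ⟨π₁, hπ₁⟩ := h₁.2.2.2.1
    have hπ₁0 : π₁ ≠ 0 := by
      intro h0
      rw [h0, sf_zero h₁] at hπ₁
      exact (WithTop.top_ne_one) hπ₁
    have hπ₁1 : f₁ π₁ = ((1 : ℤ) : WithTop ℤ) := by rw [hπ₁]; rfl
    obtain ⟨k, hk⟩ := sf_exists h₂ hπ₁0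
    have hk1 : 1 ≤ k := sf_pos h₁ h₂ H₁ hπ₁0 hπ₁1 hk le_rfl
    obtain ⟨π₂, hπ₂⟩ := h₂.2.2.2.1
    have hπ₂0 : π₂ ≠ 0 := by
      intro h0
      rw [h0, sf_zero h₂] at hπ₂
      exact (WithTop.top_ne_one) hπ₂
    have hπ₂1 : f₂ π₂ = ((1 : ℤ) : WithTop ℤ) := by rw [hπ₂]; rfl
    obtain ⟨j, hj⟩ := sf_exists h₁ hπ₂0
    have hj1 : 1 ≤ j := sf_pos h₂ h₁ H₂ hπ₂0 hπ₂1 hj le_rfl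
    -- show k = 1
    have hkeq : k = 1 := by
      by_contra hne
      have hk2 : 2 ≤ k := by omega
      set y : F := π₁ * π₂⁻¹ with hy
      have hy0 : y ≠ 0 := mul_ne_zero hπ₁0 (inv_ne_zero hπ₂0)
      have e₁ : f₁ y = ((1 + -j : ℤ) : WithTop ℤ) := by
        rw [hy, h₁.2.2.1, hπ₁1, sf_inv h₁ hπ₂0 hj]
        push_cast
        rfl
      have e₂ : f₂ y = ((k + -1 : ℤ) : WithTop ℤ) := by
        rw [hy, h₂.2.2.1, hk, sf_inv h₂ hπ₂0 hπ₂1]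
        push_cast
        rfl
      have := sf_pos h₂ h₁ H₂ hy0 e₂ e₁ (by omega)
      omega
    -- conclude equality
    funext x
    by_cases hx : x = 0
    · rw [hx, sf_zero h₁, sf_zero h₂]
    · obtain ⟨n₁, e₁⟩ := sf_exists h₁ hx
      obtain ⟨n₂, e₂⟩ := sf_exists h₂ hx
      set y : F := x * π₁ ^ (-n₁ : ℤ) with hy
      have hy0 : y ≠ 0 := mul_ne_zero hx (zpow_ne_zero _ hπ₁0)
      have ey₁ : f₁ y = ((n₁ + (-n₁) * 1 : ℤ) : WithTop ℤ) := by
        rw [hy, h₁.2.2.1, e₁, sf_zpow h₁ hπ₁0 hπ₁1 (-n₁)]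
        push_cast
        rfl
      have ey₂ : f₂ y = ((n₂ + (-n₁) * k : ℤ) : WithTop ℤ) := by
        rw [hy, h₂.2.2.1, e₂, sf_zpow h₂ hπ₁0 hk (-n₁)]
        push_cast
        rfl
      have hz := hzero y hy0 _ _ ey₁ ey₂ (by ring)
      rw [e₁, e₂]
      have : n₁ = n₂ := by
        rw [hkeq] at hz
        omega
      rw [this]
  · rintro rfl
    exact ⟨fun q => ⟨q, fun x h => h⟩, fun q => ⟨q, fun x h => h⟩⟩
end

section
/- Let S be a ring with a ring automorphism σ and a σ-derivation δ (δ(rs) = δ(r)s + σ(r)δ(s)) such that σδ = δσ. Suppose there exists t ∈ S with δ(s) = t s − σ(s) t for all s ∈ S and σ(t) = t. Then for all n ∈ ℕ and s ∈ S: δ^n(s) = Σ_{k=0}^{n} C(n,k) (−1)^k t^{n−k} σ^k(s) t^k. -/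
/-- For a commuting skew derivation `(σ,δ)` with `δ` inner, given by `t` with
`σ(t) = t`:  `δ^n(s) = Σ_{k=0}^{n} C(n,k) (−1)^k t^{n−k} σ^k(s) t^k`. -/
theorem stmt_8 {S : Type*} [Ring S] (σ : S ≃+* S) (δ : S → S)
    (hleib : ∀ r s : S, δ (r * s) = δ r * s + σ r * δ s)
    (hcomm : ∀ s : S, σ (δ s) = δ (σ s))
    (t : S) (ht : σ t = t) (hδ : ∀ s : S, δ s = t * s - σ s * t) :
    ∀ (n : ℕ) (s : S),
      δ^[n] s =
        ∑ k ∈ Finset.range (n + 1),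
          n.choose k • ((-1 : S) ^ k * (t ^ (n - k) * (⇑σ)^[k] s * t ^ k)) := by
  intro n
  induction n with
  | zero => intro s; simp
  | succ n ih =>
    intro s
    set A : ℕ → S := fun k => (-1 : S) ^ k * (t ^ (n + 1 - k) * (⇑σ)^[k] s * t ^ k) with hA
    have key : δ^[n+1] s = ∑ k ∈ Finset.range (n+1), n.choose k • (A k + A (k+1)) := by
      rw [Function.iterate_succ_apply', ih s, hδ]
      rw [Finset.mul_sum, map_sum, Finset.sum_mul, ← Finset.sum_sub_distrib]
      refine Finset.sum_congr rfl fun k hk => ?_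
      have hk' : k ≤ n := Nat.lt_succ_iff.mp (Finset.mem_range.mp hk)
      rw [mul_smul_comm, map_nsmul, smul_mul_assoc, ← smul_sub]
      congr 1
      have hσ : σ ((-1:S)^k * (t ^ (n-k) * (⇑σ)^[k] s * t^k)) =
          (-1:S)^k * (t ^ (n-k) * (⇑σ)^[k+1] s * t^k) := by
        simp [map_mul, map_pow, ht, Function.iterate_succ_apply']
      rw [hσ]
      simp only [hA]
      have h1 : n + 1 - k = (n - k) + 1 := by omega
      have h2 : n + 1 - (k+1) = n - k := by omega
      rw [h1, h2, pow_succ' t (n-k), pow_succ t k, pow_succ (-1:S) k]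
      rcases Nat.even_or_odd k with h | h
      · rw [h.neg_one_pow]; noncomm_ring
      · rw [h.neg_one_pow]; noncomm_ring
    rw [key]
    simp only [smul_add, Finset.sum_add_distrib]
    rw [Finset.sum_range_succ' (fun k => (n+1).choose k • A k) (n+1)]
    simp only [Nat.choose_succ_succ, add_smul, Nat.choose_zero_right, one_smul,
      Finset.sum_add_distrib]
    have h3 : ∑ k ∈ Finset.range (n+1), n.choose k • A k
        = ∑ k ∈ Finset.range (n+1), n.choose (k+1) • A (k+1) + A 0 := by
      rw [Finset.sum_range_succ' (fun k => n.choose k • A k) n]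
      rw [Finset.sum_range_succ (fun k => n.choose (k+1) • A (k+1)) n]
      simp
    rw [h3]
    abel
end

section
/- Let S be a ring of characteristic p (a prime) with a commuting skew derivation (σ,δ), t ∈ S with δ(s) = t s − σ(s) t for all s and σ(t) = t. Then for all m ∈ ℕ and s ∈ S: δ^{p^m}(s) = t^{p^m} s − σ^{p^m}(s) t^{p^m}. -/
/-- In characteristic `p`, for a commuting skew derivation `(σ,δ)` with `δ`
inner given by `t`, `σ(t) = t`:  `δ^{p^m}(s) = t^{p^m} s − σ^{p^m}(s) t^{p^m}`. -/
theorem stmt_9 {S : Type*} [Ring S] (p : ℕ) (hp : p.Prime) (hchar : (p : S) = 0)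
    (σ : S ≃+* S) (δ : S → S)
    (hleib : ∀ r s : S, δ (r * s) = δ r * s + σ r * δ s)
    (hcomm : ∀ s : S, σ (δ s) = δ (σ s))
    (t : S) (ht : σ t = t) (hδ : ∀ s : S, δ s = t * s - σ s * t) :
    ∀ (m : ℕ) (s : S),
      δ^[p ^ m] s = t ^ (p ^ m) * s - (⇑σ)^[p ^ m] s * t ^ (p ^ m) := by
  intro m s
  rcases subsingleton_or_nontrivial S with hS | hS
  · exact Subsingleton.elim _ _
  haveI : Fact p.Prime := ⟨hp⟩
  haveI : CharP S p := (CharP.charP_iff_prime_eq_zero hp).mpr hchar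
  haveI : CharP (AddMonoid.End S) p := ⟨fun n => by
    rw [← CharP.cast_eq_zero_iff S p n]
    constructor
    · intro h
      have := DFunLike.congr_fun h (1 : S)
      simpa [AddMonoid.End.natCast_apply, nsmul_eq_mul] using this
    · intro h
      refine AddMonoidHom.ext fun x => ?_
      show (n : ℕ) • x = 0
      rw [nsmul_eq_mul, h, zero_mul]⟩
  set L : AddMonoid.End S := AddMonoidHom.mulLeft t with hL
  set R : AddMonoid.End S :=
    (AddMonoidHom.mulRight t).comp (σ : S →+* S).toAddMonoidHom with hR
  have hLx : ∀ x : S, L x = t * x := fun x => rfl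
  have hRx : ∀ x : S, R x = σ x * t := fun x => rfl
  have hC : Commute L R := by
    refine AddMonoidHom.ext fun x => ?_
    show t * (σ x * t) = σ (t * x) * t
    rw [map_mul, ht, mul_assoc]
  have hD : δ = ⇑(L - R) := by
    funext x
    rw [show (L - R) x = L x - R x from rfl, hLx, hRx, hδ]
  have hLpow : ∀ (n : ℕ) (x : S), (L ^ n) x = t ^ n * x := by
    intro n
    induction n with
    | zero => intro x; simp
    | succ k ih =>
      intro x
      rw [pow_succ']
      show L ((L ^ k) x) = t ^ (k + 1) * x
      rw [hLx, ih, pow_succ', mul_assoc]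
  have hRpow : ∀ (n : ℕ) (x : S), (R ^ n) x = (⇑σ)^[n] x * t ^ n := by
    intro n
    induction n with
    | zero => intro x; simp
    | succ k ih =>
      intro x
      rw [pow_succ']
      show R ((R ^ k) x) = (⇑σ)^[k + 1] x * t ^ (k + 1)
      rw [hRx, ih, map_mul, map_pow, ht, Function.iterate_succ_apply', pow_succ, mul_assoc]
  calc δ^[p ^ m] s = ((L - R) ^ (p ^ m)) s := by
        rw [hD, ← AddMonoid.End.coe_pow]
    _ = (L ^ (p ^ m) - R ^ (p ^ m)) s := by
        rw [sub_pow_char_pow_of_commute p m hC]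
    _ = t ^ (p ^ m) * s - (⇑σ)^[p ^ m] s * t ^ (p ^ m) := by
        rw [show (L ^ (p ^ m) - R ^ (p ^ m)) s = (L ^ (p ^ m)) s - (R ^ (p ^ m)) s from rfl, hLpow, hRpow]
end

section
/- Let S = Q_1 × ⋯ × Q_r be a finite product of simple rings, σ ∈ Aut(S) with σ(Q_i) = Q_{i+1} (indices mod r), and suppose σ is not an inner automorphism of S. If t ∈ S satisfies: the map δ(q) = t q − σ(q) t is a σ-derivation commuting with σ (σδ = δσ), then σ(t) = t. -/
lemma my_simple_of_equiv {A B : Type*} [Ring A] [Ring B] (e : A ≃+* B) [IsSimpleRing A] :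
    IsSimpleRing B := by
  have : Nontrivial B := e.injective.nontrivial
  apply IsSimpleRing.of_eq_bot_or_eq_top
  intro I
  rcases IsSimpleRing.injective_ringHom_or_subsingleton_codomain
      (I.ringCon.mk'.comp e.toRingHom) with h | h
  · left
    have hinj : Function.Injective I.ringCon.mk' := by
      intro x y hxy
      have := h (a₁ := e.symm x) (a₂ := e.symm y) (by simpa using hxy)
      simpa using congrArg e this
    rw [← I.ker_ringCon_mk', TwoSidedIdeal.ker_eq_bot]
    exact hinj
  · right
    exact le_antisymm le_top fun x _ => I.mem_iff _ |>.2 (Quotient.eq'.1 (h.elim x 0))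

/-- If `S = Q₁ × ⋯ × Q_r` is a finite product of simple rings, `σ ∈ Aut(S)`
cyclically permutes the factors (`σ(Q_i) = Q_{i+1}`, indices mod `r`), `σ` is
not inner, and the inner map `δ(q) = t q − σ(q) t` commutes with `σ`, then
`σ(t) = t`. -/
theorem stmt_10 {r : ℕ} [NeZero r] (Q : Fin r → Type*) [∀ i, Ring (Q i)]
    [∀ i, IsSimpleRing (Q i)]
    (σ : (∀ i, Q i) ≃+* (∀ i, Q i))
    -- σ maps the i-th factor (elements supported at i) onto the (i+1)-th factor
    (hperm : ∀ i : Fin r,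
      σ '' {x : ∀ j, Q j | ∀ j : Fin r, j ≠ i → x j = 0} =
        {x : ∀ j, Q j | ∀ j : Fin r, j ≠ i + 1 → x j = 0})
    (hnotinner : ¬ ∃ v : (∀ i, Q i)ˣ, ∀ s : ∀ i, Q i, σ s = ↑v * s * ↑v⁻¹)
    (t : ∀ i, Q i)
    -- the σ-derivation δ(q) = t q − σ(q) t commutes with σ
    (hcomm : ∀ q : ∀ i, Q i,
      σ (t * q - σ q * t) = t * σ q - σ (σ q) * t) :
    σ t = t := by
  set u : ∀ i, Q i := t - σ t with hu_def
  have hu : ∀ s, u * s = σ s * u := by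
    intro s
    have h := hcomm (σ.symm s)
    rw [map_sub, map_mul, map_mul, σ.apply_symm_apply] at h
    -- h : σ t * s - σ s * σ t = t * s - σ s * t
    rw [hu_def, sub_mul, mul_sub]
    rw [sub_eq_sub_iff_add_eq_add] at h ⊢
    rw [← h]; exact add_comm _ _
  have key : u = 0 := by
    by_cases hr : r = 1
    · subst hr
      -- transfer simplicity to the product (a single factor)
      letI e : (∀ i, Q i) ≃+* Q default :=
        { Equiv.piUnique Q with
          map_mul' := fun _ _ => rfl
          map_add' := fun _ _ => rfl }
      haveI : IsSimpleRing (∀ i, Q i) := my_simple_of_equiv e.symm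
      by_contra h0
      -- right ideal u*S is two-sided
      set J : TwoSidedIdeal (∀ i, Q i) := TwoSidedIdeal.mk'
        {x | ∃ s, x = u * s}
        ⟨0, (mul_zero u).symm⟩
        (fun {x y} ⟨s, hs⟩ ⟨s', hs'⟩ => ⟨s + s', by rw [hs, hs', mul_add]⟩)
        (fun {x} ⟨s, hs⟩ => ⟨-s, by rw [hs, mul_neg]⟩)
        (fun {x y} ⟨s, hs⟩ => ⟨σ.symm x * s, by
          have hx : x * u = u * σ.symm x := by
            have h2 := hu (σ.symm x); rw [σ.apply_symm_apply] at h2; exact h2.symm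
          rw [hs, ← mul_assoc, hx, mul_assoc]⟩)
        (fun {x y} ⟨s, hs⟩ => ⟨s * y, by rw [hs, mul_assoc]⟩) with hJ
      have h1 : (1 : ∀ i, Q i) ∈ J :=
        IsSimpleRing.one_mem_of_ne_zero_mem J h0
          (by rw [hJ, TwoSidedIdeal.mem_mk']; exact ⟨1, (mul_one u).symm⟩)
      rw [hJ, TwoSidedIdeal.mem_mk'] at h1
      obtain ⟨s, hs⟩ := h1
      -- left ideal S*u is two-sided
      set J' : TwoSidedIdeal (∀ i, Q i) := TwoSidedIdeal.mk'
        {x | ∃ s, x = s * u}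
        ⟨0, (zero_mul u).symm⟩
        (fun {x y} ⟨a, ha⟩ ⟨b, hb⟩ => ⟨a + b, by rw [ha, hb, add_mul]⟩)
        (fun {x} ⟨a, ha⟩ => ⟨-a, by rw [ha, neg_mul]⟩)
        (fun {x y} ⟨a, ha⟩ => ⟨x * a, by rw [ha, mul_assoc]⟩)
        (fun {x y} ⟨a, ha⟩ => ⟨a * σ y, by rw [ha, mul_assoc, mul_assoc, ← hu y]⟩) with hJ'
      have h1' : (1 : ∀ i, Q i) ∈ J' :=
        IsSimpleRing.one_mem_of_ne_zero_mem J' h0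
          (by rw [hJ', TwoSidedIdeal.mem_mk']; exact ⟨1, (one_mul u).symm⟩)
      rw [hJ', TwoSidedIdeal.mem_mk'] at h1'
      obtain ⟨s', hs'⟩ := h1'
      have hss' : s' = s := by
        calc s' = s' * (u * s) := by rw [← hs, mul_one]
          _ = (s' * u) * s := by rw [mul_assoc]
          _ = s := by rw [← hs', one_mul]
      have hsu : s * u = 1 := by rw [← hss', ← hs']
      refine hnotinner ⟨⟨u, s, hs.symm, hsu⟩, fun q => ?_⟩
      show σ q = u * q * s
      calc σ q = σ q * (u * s) := by rw [← hs, mul_one]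
        _ = (σ q * u) * s := by rw [mul_assoc]
        _ = (u * q) * s := by rw [← hu q]
    · -- r ≥ 2 : coordinatewise argument
      have hne : ∀ i : Fin r, (i + 1 : Fin r) ≠ i := by
        intro i h
        have : (1 : Fin r) = 0 := by
          have := congrArg (· - i) h
          simpa [add_sub_cancel_right] using this
        rw [Fin.one_eq_zero_iff] at this
        exact hr this
      funext i
      set s : ∀ j, Q j := Pi.single i (1 : Q i) with hs_def
      have hmem : σ s ∈ {x : ∀ j, Q j | ∀ j : Fin r, j ≠ i + 1 → x j = 0} := by
        rw [← hperm i]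
        exact Set.mem_image_of_mem _ (fun j hj => Pi.single_eq_of_ne hj 1)
      have h0 : (σ s) i = 0 := hmem i (hne i).symm -- careful direction
      have := congrFun (hu s) i
      rw [Pi.mul_apply, Pi.mul_apply, h0, zero_mul, hs_def, Pi.single_eq_same, mul_one] at this
      exact this
  rw [hu_def, sub_eq_zero] at key
  exact key.symm
end

section
/- Let (S,w) be a complete filtered ring, v = (v_i)_{i∈ℕ} a bounded infinite row vector, and A, B bounded column-null infinite matrices over S. Then (vA)B = v(AB), where all products are defined entrywise as convergent series. -/
/-- The sequence `s` converges to `L` with respect to the filtration `w`. -/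
def WConvergesTo {S : Type*} [Ring S] (w : S → WithTop ℤ) (s : ℕ → S) (L : S) : Prop :=
  ∀ k : ℤ, ∃ N : ℕ, ∀ n ≥ N, (k : WithTop ℤ) ≤ w (s n - L)

/-- The series `Σ x_j` converges to `L` with respect to `w`. -/
def WSeriesTo {S : Type*} [Ring S] (w : S → WithTop ℤ) (x : ℕ → S) (L : S) : Prop :=
  WConvergesTo w (fun n => ∑ j ∈ Finset.range n, x j) L

/-- A finite sum of elements of `w`-value at least `t` has `w`-value at least `t`. -/
lemma fin_sum_bound {S : Type*} [Ring S] (w : S → WithTop ℤ)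
    (hadd : ∀ x y : S, min (w x) (w y) ≤ w (x + y)) (hzero : w 0 = ⊤)
    (t : WithTop ℤ) (f : ℕ → S) (s : Finset ℕ)
    (h : ∀ j ∈ s, t ≤ w (f j)) : t ≤ w (∑ j ∈ s, f j) := by
  classical
  revert h
  induction s using Finset.cons_induction with
  | empty => intro _h; simp [hzero]
  | cons a s ha ih =>
    intro h
    rw [Finset.sum_cons]
    exact le_trans (le_min (h a (Finset.mem_cons_self a s))
      (ih fun j hj => h j (Finset.mem_cons_of_mem hj))) (hadd _ _)

/-- Uniform tail bound: if all terms from `J` on have `w`-value at least `t - c`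
(where `c = w(-1)`), then all partial sums from `J` on are within `t` of the limit. -/
lemma tail_bound {S : Type*} [Ring S] (w : S → WithTop ℤ)
    (hadd : ∀ x y : S, min (w x) (w y) ≤ w (x + y))
    (hzero : w 0 = ⊤)
    (hmul : ∀ x y : S, w x + w y ≤ w (x * y))
    (c : ℤ) (hc : w (-1 : S) = (c : WithTop ℤ))
    (f : ℕ → S) (L : S) (hL : WSeriesTo w f L) (t : ℤ) (J : ℕ)
    (hf : ∀ j ≥ J, ((t - c : ℤ) : WithTop ℤ) ≤ w (f j)) :
    ∀ n ≥ J, (t : WithTop ℤ) ≤ w (∑ j ∈ Finset.range n, f j - L) := by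
  intro n hn
  obtain ⟨Nt, hNt⟩ := hL t
  have hm1 : (t : WithTop ℤ) ≤ w (∑ j ∈ Finset.range (max n Nt), f j - L) :=
    hNt (max n Nt) (le_max_right _ _)
  have hIco : ((t - c : ℤ) : WithTop ℤ) ≤ w (∑ j ∈ Finset.Ico n (max n Nt), f j) :=
    fin_sum_bound w hadd hzero _ _ _
      (fun j hj => hf j (le_trans hn (Finset.mem_Ico.mp hj).1))
  have hdiff : ∑ j ∈ Finset.Ico n (max n Nt), f j =
      ∑ j ∈ Finset.range (max n Nt), f j - ∑ j ∈ Finset.range n, f j :=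
    Finset.sum_Ico_eq_sub f (le_max_left n Nt)
  have h2 : (t : WithTop ℤ) ≤
      w (∑ j ∈ Finset.range n, f j - ∑ j ∈ Finset.range (max n Nt), f j) := by
    have heq : ∑ j ∈ Finset.range n, f j - ∑ j ∈ Finset.range (max n Nt), f j =
        -(∑ j ∈ Finset.Ico n (max n Nt), f j) := by rw [hdiff]; abel
    rw [heq]
    have h3 := hmul (∑ j ∈ Finset.Ico n (max n Nt), f j) (-1)
    rw [mul_neg_one, hc] at h3
    calc (t : WithTop ℤ) = ((t - c : ℤ) : WithTop ℤ) + (c : WithTop ℤ) := by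
          rw [← WithTop.coe_add]; congr 1; ring
      _ ≤ w (∑ j ∈ Finset.Ico n (max n Nt), f j) + (c : WithTop ℤ) :=
          add_le_add hIco le_rfl
      _ ≤ w (-(∑ j ∈ Finset.Ico n (max n Nt), f j)) := h3
  have hsplit : ∑ j ∈ Finset.range n, f j - L =
      (∑ j ∈ Finset.range n, f j - ∑ j ∈ Finset.range (max n Nt), f j) +
        (∑ j ∈ Finset.range (max n Nt), f j - L) := by abel
  rw [hsplit]
  exact le_trans (le_min h2 hm1) (hadd _ _)

/-- Associativity `(vA)B = v(AB)` for a bounded infinite row vector `v` and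
bounded column-null infinite matrices `A`, `B` over a complete filtered ring. -/
theorem stmt_14 {S : Type*} [Ring S] (w : S → WithTop ℤ)
    (hadd : ∀ x y : S, min (w x) (w y) ≤ w (x + y))
    (hsep : ∀ x : S, w x = ⊤ ↔ x = 0)
    (hone : w 1 = 0)
    (hmul : ∀ x y : S, w x + w y ≤ w (x * y))
    (hcomplete : ∀ s : ℕ → S,
      (∀ k : ℤ, ∃ N : ℕ, ∀ m ≥ N, ∀ n ≥ N, (k : WithTop ℤ) ≤ w (s m - s n)) →
      ∃ L : S, WConvergesTo w s L)
    (v : ℕ → S) (A B : ℕ → ℕ → S) (K M N : ℤ)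
    (hv : ∀ i, (K : WithTop ℤ) ≤ w (v i))
    (hA : ∀ i j, (M : WithTop ℤ) ≤ w (A i j))
    (hB : ∀ i j, (N : WithTop ℤ) ≤ w (B i j))
    (hAcn : ∀ k : ℕ, ∀ K' : ℤ, ∃ I : ℕ, ∀ i ≥ I, (K' : WithTop ℤ) ≤ w (A i k))
    (hBcn : ∀ k : ℕ, ∀ K' : ℤ, ∃ J : ℕ, ∀ j ≥ J, (K' : WithTop ℤ) ≤ w (B j k))
    -- the products vA and AB (defined entrywise as convergent series)
    (vA : ℕ → S) (hvA : ∀ j : ℕ, WSeriesTo w (fun i => v i * A i j) (vA j))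
    (AB : ℕ → ℕ → S) (hAB : ∀ i k : ℕ, WSeriesTo w (fun j => A i j * B j k) (AB i k))
    -- entries of (vA)B and v(AB)
    (k : ℕ) (x y : S)
    (hx : WSeriesTo w (fun j => vA j * B j k) x)
    (hy : WSeriesTo w (fun i => v i * AB i k) y) :
    x = y := by
  classical
  by_cases htriv : (1 : S) = 0
  · have hall : ∀ z : S, z = 0 := fun z => by
      calc z = z * 1 := (mul_one z).symm
        _ = z * 0 := by rw [htriv]
        _ = 0 := mul_zero z
    rw [hall x, hall y]
  · have hzero : w 0 = ⊤ := (hsep 0).2 rfl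
    obtain ⟨c, hcEq⟩ : ∃ c : ℤ, w (-1 : S) = (c : WithTop ℤ) := by
      cases hw : w (-1 : S) with
      | top => exact absurd (neg_eq_zero.mp ((hsep _).1 hw)) htriv
      | coe a => exact ⟨a, rfl⟩
    have hneg' : ∀ (a : ℤ) (z : S),
        ((a - c : ℤ) : WithTop ℤ) ≤ w z → (a : WithTop ℤ) ≤ w (-z) := by
      intro a z hz
      have h1 := hmul z (-1)
      rw [mul_neg_one, hcEq] at h1
      calc (a : WithTop ℤ) = ((a - c : ℤ) : WithTop ℤ) + (c : WithTop ℤ) := by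
            rw [← WithTop.coe_add]; congr 1; ring
        _ ≤ w z + (c : WithTop ℤ) := add_le_add hz le_rfl
        _ ≤ w (-z) := h1
    have wle : ∀ (a b : ℤ) (z : S), a ≤ b →
        (b : WithTop ℤ) ≤ w z → (a : WithTop ℤ) ≤ w z :=
      fun a b z hab hb => le_trans (by exact_mod_cast hab) hb
    have mulb : ∀ (a b : ℤ) (z₁ z₂ : S), (a : WithTop ℤ) ≤ w z₁ →
        (b : WithTop ℤ) ≤ w z₂ → ((a + b : ℤ) : WithTop ℤ) ≤ w (z₁ * z₂) := by
      intro a b z₁ z₂ h1 h2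
      rw [WithTop.coe_add]
      exact le_trans (add_le_add h1 h2) (hmul _ _)
    have key : ∀ t : ℤ, (t : WithTop ℤ) ≤ w (x - y) := by
      intro t
      obtain ⟨J, hJ⟩ := hBcn k (t - K - c - M)
      have hd_tail : ∀ (i n : ℕ), n ≥ J →
          ((t - K : ℤ) : WithTop ℤ) ≤ w (∑ j ∈ Finset.range n, A i j * B j k - AB i k) := by
        intro i n hn
        refine tail_bound w hadd hzero hmul c hcEq _ _ (hAB i k) (t - K) J ?_ n hn
        intro j hj
        exact wle _ (M + (t - K - c - M)) _ (by omega)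
          (mulb M (t - K - c - M) _ _ (hA i j) (hJ j hj))
      obtain ⟨N1, hN1⟩ := hx (t - c)
      set n : ℕ := max N1 J with hn_def
      choose Nj hNj using fun j => hvA j (t - N - c)
      obtain ⟨N2, hN2⟩ := hy t
      set m : ℕ := max N2 ((Finset.range n).sup Nj) with hm_def
      set P1 : S := ∑ j ∈ Finset.range n, vA j * B j k with hP1
      set Q : S := ∑ i ∈ Finset.range m, v i * (∑ j ∈ Finset.range n, A i j * B j k) with hQ
      set P4 : S := ∑ i ∈ Finset.range m, v i * AB i k with hP4
      have hmge : ∀ j ∈ Finset.range n, Nj j ≤ m :=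
        fun j hj => le_trans (Finset.le_sup hj) (le_max_right _ _)
      -- (a)
      have hA1 : (t : WithTop ℤ) ≤ w (x - P1) := by
        have h : ((t - c : ℤ) : WithTop ℤ) ≤ w (P1 - x) := hN1 n (le_max_left _ _)
        have h2 := hneg' t (P1 - x) h
        rwa [neg_sub] at h2
      -- (b)
      have hB4 : (t : WithTop ℤ) ≤ w (P4 - y) := hN2 m (le_max_left _ _)
      -- (c)
      have hC : (t : WithTop ℤ) ≤ w (P1 - Q) := by
        have hQeq : Q = ∑ j ∈ Finset.range n, (∑ i ∈ Finset.range m, v i * A i j) * B j k := by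
          rw [hQ]
          simp only [Finset.mul_sum, Finset.sum_mul, mul_assoc]
          exact Finset.sum_comm
        have hPQ : P1 - Q =
            ∑ j ∈ Finset.range n, (vA j - ∑ i ∈ Finset.range m, v i * A i j) * B j k := by
          rw [hQeq, hP1, ← Finset.sum_sub_distrib]
          exact Finset.sum_congr rfl fun j _ => (sub_mul _ _ _).symm
        rw [hPQ]
        refine fin_sum_bound w hadd hzero _ _ _ ?_
        intro j hj
        have h1 : ((t - N - c : ℤ) : WithTop ℤ) ≤
            w ((∑ i ∈ Finset.range m, v i * A i j) - vA j) := hNj j m (hmge j hj)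
        have h2 : ((t - N : ℤ) : WithTop ℤ) ≤
            w (vA j - ∑ i ∈ Finset.range m, v i * A i j) := by
          have := hneg' (t - N) _ h1
          rwa [neg_sub] at this
        exact wle t ((t - N) + N) _ (by omega) (mulb (t - N) N _ _ h2 (hB j k))
      -- (d)
      have hD : (t : WithTop ℤ) ≤ w (Q - P4) := by
        have hQP : Q - P4 = ∑ i ∈ Finset.range m,
            v i * ((∑ j ∈ Finset.range n, A i j * B j k) - AB i k) := by
          rw [hQ, hP4, ← Finset.sum_sub_distrib]
          exact Finset.sum_congr rfl fun i _ => (mul_sub _ _ _).symm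
        rw [hQP]
        refine fin_sum_bound w hadd hzero _ _ _ ?_
        intro i _
        exact wle t (K + (t - K)) _ (by omega)
          (mulb K (t - K) _ _ (hv i) (hd_tail i n (le_max_right _ _)))
      have hsplit : x - y = (x - P1) + ((P1 - Q) + ((Q - P4) + (P4 - y))) := by abel
      rw [hsplit]
      refine le_trans (le_min hA1 ?_) (hadd _ _)
      refine le_trans (le_min hC ?_) (hadd _ _)
      exact le_trans (le_min hD hB4) (hadd _ _)
    have htop : w (x - y) = ⊤ := by
      cases hw : w (x - y) with
      | top => rfl
      | coe a =>
        have h1 := key (a + 1)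
        rw [hw] at h1
        have h2 : (a + 1 : ℤ) ≤ a := by exact_mod_cast h1
        omega
    exact sub_eq_zero.mp ((hsep _).1 htop)
end

section
/- Let S be a ring, σ ∈ Aut(S) with σ^p inner (p a prime), and assume S has no two-sided ideals invariant under σ other than 0 and S. Let R = ⊕_{i=0}^{p−1} S g^i be a crossed product of S with ℤ/pℤ, where g s = σ(s) g for all s ∈ S and g^p = c ∈ S^×. If R contains a two-sided ideal I with 0 ≠ I ≠ R, then σ is an inner automorphism of S, given by conjugation by a σ-invariant unit u ∈ S^×. -/
/-- Let `R = S ∗ ℤ/pℤ = ⊕_{i<p} S gⁱ` be a crossed product, with `g s = σ(s) g`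
and `g^p = c ∈ Sˣ`, where `σ^p` is inner and `S` has no non-trivial
`σ`-invariant two-sided ideals.  If `R` has a two-sided ideal `I` with
`0 ≠ I ≠ R`, then `σ` is inner, given by conjugation by a `σ`-invariant unit. -/
theorem stmt_16 {R : Type*} [Ring R] (p : ℕ) (hp : p.Prime)
    (S : Subring R) (σ : S ≃+* S) (g : R)
    -- crossed product relations
    (hrel : ∀ s : S, g * (s : R) = ((σ s : S) : R) * g)
    (c : Sˣ) (hc : g ^ p = ((c : S) : R))
    -- R is a free left S-module with basis 1, g, …, g^{p-1}
    (hbasis : ∀ r : R, ∃! co : Fin p → S,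
      r = ∑ i : Fin p, ((co i : S) : R) * g ^ (i : ℕ))
    -- σ^p is inner
    (hinner : ∃ a : Sˣ, ∀ s : S, (⇑σ)^[p] s = ↑a * s * ↑a⁻¹)
    -- S has no σ-invariant two-sided ideals other than 0 and S
    (hsimple : ∀ I : TwoSidedIdeal S, (∀ s : S, s ∈ I ↔ σ s ∈ I) → I = ⊥ ∨ I = ⊤)
    -- a non-trivial two-sided ideal of R
    (I : TwoSidedIdeal R) (hI0 : I ≠ ⊥) (hI1 : I ≠ ⊤) :
    ∃ u : Sˣ, σ ↑u = ↑u ∧ ∀ s : S, σ s = ↑u * s * ↑u⁻¹ := by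
  classical
  have hp2 : 2 ≤ p := hp.two_le
  -- iterates of σ are ring homs
  have hit_mul : ∀ (n : ℕ) (s t : S), (⇑σ)^[n] (s * t) = (⇑σ)^[n] s * (⇑σ)^[n] t := by
    intro n
    induction n with
    | zero => intro s t; rfl
    | succ n ih => intro s t; simp [Function.iterate_succ_apply', ih, map_mul]
  have hit_one : ∀ n : ℕ, (⇑σ)^[n] (1 : S) = 1 := by
    intro n
    induction n with
    | zero => rfl
    | succ n ih => simp [Function.iterate_succ_apply', ih]
  have hit_surj : ∀ n : ℕ, Function.Surjective ((⇑σ)^[n]) :=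
    fun n => Function.Surjective.iterate σ.surjective n
  have hit_inv : ∀ (n : ℕ) (t : S), (⇑σ)^[n] ((⇑σ.symm)^[n] t) = t :=
    fun n => Function.LeftInverse.iterate σ.apply_symm_apply n
  -- powers of g versus S
  have hgs : ∀ (n : ℕ) (s : S), g ^ n * (s : R) = (((⇑σ)^[n] s : S) : R) * g ^ n := by
    intro n
    induction n with
    | zero => intro s; simp
    | succ n ih =>
      intro s
      rw [pow_succ', mul_assoc, ih, ← mul_assoc, hrel, mul_assoc, ← pow_succ',
        Function.iterate_succ_apply']
  -- g is a unit
  have hg1 : g * g ^ (p - 1) = g ^ p := by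
    rw [← pow_succ']; congr 1; omega
  have hg2 : g ^ (p - 1) * g = g ^ p := by
    rw [← pow_succ]; congr 1; omega
  have hcc : ((c : S) : R) * (((c⁻¹ : Sˣ) : S) : R) = 1 := by
    rw [← Subring.coe_mul]; simp
  have hcc' : ((((c⁻¹ : Sˣ) : S)) : R) * ((c : S) : R) = 1 := by
    rw [← Subring.coe_mul]; simp
  have hgv : g * (g ^ (p - 1) * (((c⁻¹ : Sˣ) : S) : R)) = 1 := by
    rw [← mul_assoc, hg1, hc, hcc]
  have hvg : (g ^ (p - 1) * (((c⁻¹ : Sˣ) : S) : R)) * g = 1 := by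
    have h1 : ((((c⁻¹ : Sˣ) : S)) : R) * g ^ (p - 1) * g = 1 := by
      rw [mul_assoc, hg2, hc, hcc']
    calc g ^ (p - 1) * (((c⁻¹ : Sˣ) : S) : R) * g
        = (((((c⁻¹ : Sˣ) : S)) : R) * g ^ (p - 1) * g) * (g ^ (p - 1) * (((c⁻¹ : Sˣ) : S) : R) * g) := by
          rw [h1, one_mul]
      _ = ((((c⁻¹ : Sˣ) : S)) : R) * g ^ (p - 1) * ((g * (g ^ (p - 1) * (((c⁻¹ : Sˣ) : S) : R))) * g) := by
          simp only [mul_assoc]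
      _ = 1 := by rw [hgv, one_mul, mul_assoc, hg2, hc, hcc']
  set gu : Rˣ := ⟨g, g ^ (p - 1) * (((c⁻¹ : Sˣ) : S) : R), hgv, hvg⟩ with hgu
  have hgu_val : (gu : R) = g := rfl
  -- coefficients
  choose co hco huniq using hbasis
  have co_eq : ∀ (r : R) (a : Fin p → S),
      r = ∑ i : Fin p, ((a i : S) : R) * g ^ (i : ℕ) → co r = a :=
    fun r a h => (huniq r a h).symm
  have co_zero : co (0 : R) = 0 := by
    apply co_eq; simp
  have eq_zero_of_co : ∀ r : R, co r = 0 → r = 0 := by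
    intro r h
    rw [hco r, h]; simp
  have co_sub : ∀ r r' : R, co (r - r') = co r - co r' := by
    intro r r'
    apply co_eq
    conv_lhs => rw [hco r, hco r']
    rw [← Finset.sum_sub_distrib]
    refine Finset.sum_congr rfl fun i _ => ?_
    simp only [Pi.sub_apply]
    push_cast
    rw [sub_mul]
  have co_add : ∀ r r' : R, co (r + r') = co r + co r' := by
    intro r r'
    apply co_eq
    conv_lhs => rw [hco r, hco r']
    rw [← Finset.sum_add_distrib]
    refine Finset.sum_congr rfl fun i _ => ?_
    simp only [Pi.add_apply]
    push_cast
    rw [add_mul]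
  have co_left : ∀ (s : S) (r : R), co ((s : R) * r) = fun i => s * co r i := by
    intro s r
    apply co_eq
    conv_lhs => rw [hco r]
    rw [Finset.mul_sum]
    refine Finset.sum_congr rfl fun i _ => ?_
    push_cast
    rw [mul_assoc]
  have co_right : ∀ (s : S) (r : R),
      co (r * (s : R)) = fun i => co r i * (⇑σ)^[(i : ℕ)] s := by
    intro s r
    apply co_eq
    conv_lhs => rw [hco r]
    rw [Finset.sum_mul]
    refine Finset.sum_congr rfl fun i _ => ?_
    push_cast
    rw [mul_assoc, hgs, ← mul_assoc]
  have hginv : g * ((gu⁻¹ : Rˣ) : R) = 1 := by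
    rw [← hgu_val]; exact Units.mul_inv gu
  have hinvg : ((gu⁻¹ : Rˣ) : R) * g = 1 := by
    rw [← hgu_val]; exact Units.inv_mul gu
  have co_conj : ∀ r : R, co (g * r * ((gu⁻¹ : Rˣ) : R)) = fun i => σ (co r i) := by
    intro r
    apply co_eq
    conv_lhs => rw [hco r]
    rw [Finset.mul_sum, Finset.sum_mul]
    refine Finset.sum_congr rfl fun i _ => ?_
    rw [← mul_assoc, hrel, mul_assoc, mul_assoc]
    congr 1
    rw [← mul_assoc, ← pow_succ', pow_succ, mul_assoc, hginv, mul_one]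
  have co_conj' : ∀ r : R, co (((gu⁻¹ : Rˣ) : R) * r * g) = fun i => σ.symm (co r i) := by
    intro r
    apply co_eq
    conv_lhs => rw [hco r]
    rw [Finset.mul_sum, Finset.sum_mul]
    refine Finset.sum_congr rfl fun i _ => ?_
    have h1 : ((gu⁻¹ : Rˣ) : R) * ((co r i : S) : R)
        = ((σ.symm (co r i) : S) : R) * ((gu⁻¹ : Rˣ) : R) := by
      have h2 := hrel (σ.symm (co r i))
      rw [RingEquiv.apply_symm_apply] at h2
      calc ((gu⁻¹ : Rˣ) : R) * ((co r i : S) : R)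
          = ((gu⁻¹ : Rˣ) : R) * (((co r i : S) : R) * g) * ((gu⁻¹ : Rˣ) : R) := by
            conv_rhs => rw [mul_assoc, mul_assoc, hginv, mul_one]
        _ = ((gu⁻¹ : Rˣ) : R) * (g * ((σ.symm (co r i) : S) : R)) * ((gu⁻¹ : Rˣ) : R) := by
            rw [← h2]
        _ = (((gu⁻¹ : Rˣ) : R) * g) * (((σ.symm (co r i) : S) : R) * ((gu⁻¹ : Rˣ) : R)) := by
            simp only [mul_assoc]
        _ = ((σ.symm (co r i) : S) : R) * ((gu⁻¹ : Rˣ) : R) := by rw [hinvg, one_mul]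
    rw [← mul_assoc, h1, mul_assoc, mul_assoc]
    congr 1
    rw [← pow_succ, pow_succ', ← mul_assoc, hinvg, one_mul]
  -- support
  set supp : R → Finset (Fin p) := fun r => Finset.univ.filter (fun i => co r i ≠ 0) with hsupp
  have mem_supp : ∀ (r : R) (i : Fin p), i ∈ supp r ↔ co r i ≠ 0 := by
    intro r i; simp [hsupp]
  -- a nonzero element of I
  have hex : ∃ r, r ∈ I ∧ r ≠ 0 := by
    by_contra h
    push_neg at h
    apply hI0
    refine SetLike.ext fun r => ?_
    rw [TwoSidedIdeal.mem_bot]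
    exact ⟨fun hr => h r hr, fun hr => hr ▸ I.zero_mem⟩
  have hPn : ∃ n, ∃ r, r ∈ I ∧ r ≠ 0 ∧ (supp r).card = n := by
    obtain ⟨r, h1, h2⟩ := hex
    exact ⟨(supp r).card, r, h1, h2, rfl⟩
  obtain ⟨x, hxI, hx0, hxcard⟩ := Nat.find_spec hPn
  have hmin : ∀ r, r ∈ I → r ≠ 0 → Nat.find hPn ≤ (supp r).card :=
    fun r h1 h2 => Nat.find_le ⟨r, h1, h2, rfl⟩
  obtain ⟨i0, hi0⟩ : ∃ i, co x i ≠ 0 := by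
    by_contra h
    push_neg at h
    exact hx0 (eq_zero_of_co x (funext h))
  have hi0s : i0 ∈ supp x := (mem_supp x i0).2 hi0
  -- the set of i0-th coefficients of small-support elements of I
  set Jc : Set S := {s : S | ∃ r, r ∈ I ∧ supp r ⊆ supp x ∧ co r i0 = s} with hJc
  have hJmem : ∀ s : S, s ∈ Jc ↔ ∃ r, r ∈ I ∧ supp r ⊆ supp x ∧ co r i0 = s := fun s => Iff.rfl
  have hJ0 : (0 : S) ∈ Jc := ⟨0, I.zero_mem, by simp [hsupp, co_zero], by rw [co_zero]; rfl⟩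
  have hJadd : ∀ {s t : S}, s ∈ Jc → t ∈ Jc → s + t ∈ Jc := by
    rintro s t ⟨r, hrI, hrs, rfl⟩ ⟨r', hr'I, hr's, rfl⟩
    refine ⟨r + r', I.add_mem hrI hr'I, ?_, by rw [co_add]; rfl⟩
    intro i hi
    rw [mem_supp, co_add] at hi
    by_cases h1 : co r i = 0
    · exact hr's ((mem_supp r' i).2 fun h2 => hi (by simp [Pi.add_apply, h1, h2]))
    · exact hrs ((mem_supp r i).2 h1)
  have hJneg : ∀ {s : S}, s ∈ Jc → -s ∈ Jc := by
    rintro s ⟨r, hrI, hrs, rfl⟩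
    refine ⟨0 - r, I.sub_mem I.zero_mem hrI, ?_, by rw [co_sub, co_zero]; simp⟩
    intro i hi
    rw [mem_supp, co_sub, co_zero] at hi
    refine hrs ((mem_supp r i).2 fun h2 => hi (by simp [h2]))
  have hJleft : ∀ {t s : S}, s ∈ Jc → t * s ∈ Jc := by
    rintro t s ⟨r, hrI, hrs, rfl⟩
    refine ⟨(t : R) * r, I.mul_mem_left _ _ hrI, ?_, by rw [co_left]⟩
    intro i hi
    rw [mem_supp, co_left] at hi
    refine hrs ((mem_supp r i).2 fun h2 => hi (by simp [h2]))
  have hJright : ∀ {s t : S}, s ∈ Jc → s * t ∈ Jc := by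
    rintro s t ⟨r, hrI, hrs, rfl⟩
    obtain ⟨t', ht'⟩ := hit_surj (i0 : ℕ) t
    refine ⟨r * (t' : R), I.mul_mem_right _ _ hrI, ?_, by
      rw [co_right]
      show co r i0 * (⇑σ)^[(i0 : ℕ)] t' = co r i0 * t
      rw [ht']⟩
    intro i hi
    rw [mem_supp, co_right] at hi
    refine hrs ((mem_supp r i).2 fun h2 => hi (by simp [h2]))
  set J : TwoSidedIdeal S := TwoSidedIdeal.mk' Jc hJ0 hJadd hJneg hJleft hJright with hJ
  have hJmem' : ∀ s : S, s ∈ J ↔ s ∈ Jc := fun s =>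
    TwoSidedIdeal.mem_mk' Jc hJ0 hJadd hJneg hJleft hJright s
  -- J is σ-invariant
  have hJinv : ∀ s : S, s ∈ J ↔ σ s ∈ J := by
    intro s
    rw [hJmem', hJmem']
    constructor
    · rintro ⟨r, hrI, hrs, rfl⟩
      refine ⟨g * r * ((gu⁻¹ : Rˣ) : R), I.mul_mem_right _ _ (I.mul_mem_left _ _ hrI), ?_,
        by rw [co_conj]⟩
      intro i hi
      rw [mem_supp, co_conj] at hi
      refine hrs ((mem_supp r i).2 fun h2 => hi (by simp [h2]))
    · rintro ⟨r, hrI, hrs, hr0⟩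
      refine ⟨((gu⁻¹ : Rˣ) : R) * r * g, I.mul_mem_right _ _ (I.mul_mem_left _ _ hrI), ?_,
        by rw [co_conj']; simp only [hr0]; exact σ.symm_apply_apply s⟩
      intro i hi
      rw [mem_supp, co_conj'] at hi
      refine hrs ((mem_supp r i).2 fun h2 => hi (by simp [h2]))
  -- J = ⊤, giving an element with coefficient 1 at i0
  have hJtop : J = ⊤ := by
    rcases hsimple J hJinv with h | h
    · exfalso
      have : co x i0 ∈ J := (hJmem' _).2 ⟨x, hxI, le_refl _, rfl⟩
      rw [h, TwoSidedIdeal.mem_bot] at this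
      exact hi0 this
    · exact h
  obtain ⟨x', hx'I, hx'supp, hx'i0⟩ : (1 : S) ∈ Jc := by
    rw [← hJmem', hJtop]; exact TwoSidedIdeal.mem_top _
  -- elements of I with small support and zero i0-coefficient vanish
  have hsmall : ∀ y : R, y ∈ I → supp y ⊆ supp x → co y i0 = 0 → y = 0 := by
    intro y hyI hysupp hy0
    by_contra hy
    have h1 := hmin y hyI hy
    have h2 : supp y ⊆ (supp x).erase i0 := by
      intro j hj
      rw [Finset.mem_erase]
      refine ⟨fun hj0 => ?_, hysupp hj⟩
      rw [mem_supp] at hj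
      exact hj (hj0 ▸ hy0)
    have h3 := Finset.card_le_card h2
    rw [Finset.card_erase_of_mem hi0s] at h3
    have h4 : 1 ≤ (supp x).card := Finset.card_pos.2 ⟨i0, hi0s⟩
    omega
  have hS1 : (1 : S) ≠ 0 := by
    intro h
    apply hx0
    apply eq_zero_of_co
    funext i
    calc co x i = co x i * 1 := (mul_one _).symm
      _ = 0 := by rw [h, mul_zero]
  -- the commutation relations for the coefficients of x'
  have hA : ∀ (s : S) (i : Fin p),
      (⇑σ)^[(i0 : ℕ)] s * co x' i = co x' i * (⇑σ)^[(i : ℕ)] s := by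
    intro s i
    set y := ((((⇑σ)^[(i0 : ℕ)] s : S)) : R) * x' - x' * (s : R) with hy
    have hyI : y ∈ I := I.sub_mem (I.mul_mem_left _ _ hx'I) (I.mul_mem_right _ _ hx'I)
    have hcoy : ∀ j, co y j = (⇑σ)^[(i0 : ℕ)] s * co x' j - co x' j * (⇑σ)^[(j : ℕ)] s := by
      intro j; rw [hy, co_sub, co_left, co_right]; rfl
    have hyi0 : co y i0 = 0 := by rw [hcoy, hx'i0, mul_one, one_mul, sub_self]
    have hysupp : supp y ⊆ supp x := by
      intro j hj
      rw [mem_supp, hcoy] at hj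
      by_cases hz : co x' j = 0
      · exact absurd (by rw [hz]; simp) hj
      · exact hx'supp ((mem_supp _ _).2 hz)
    have h0 := hsmall y hyI hysupp hyi0
    have h3 : co y i = 0 := by rw [h0, co_zero]; rfl
    rw [hcoy] at h3
    exact sub_eq_zero.mp h3
  have hB : ∀ i, σ (co x' i) = co x' i := by
    intro i
    set z := g * x' * ((gu⁻¹ : Rˣ) : R) - x' with hz
    have hzI : z ∈ I := I.sub_mem (I.mul_mem_right _ _ (I.mul_mem_left _ _ hx'I)) hx'I
    have hcoz : ∀ j, co z j = σ (co x' j) - co x' j := by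
      intro j; rw [hz, co_sub, co_conj]; rfl
    have hzi0 : co z i0 = 0 := by rw [hcoz, hx'i0, map_one, sub_self]
    have hzsupp : supp z ⊆ supp x := by
      intro j hj
      rw [mem_supp, hcoz] at hj
      by_cases hzz : co x' j = 0
      · exact absurd (by rw [hzz]; simp) hj
      · exact hx'supp ((mem_supp _ _).2 hzz)
    have h0 := hsmall z hzI hzsupp hzi0
    have h3 : co z i = 0 := by rw [h0, co_zero]; rfl
    rw [hcoz] at h3
    exact sub_eq_zero.mp h3
  -- there is a second index in the support
  obtain ⟨i1, hi1ne, hi1⟩ : ∃ i1, i1 ≠ i0 ∧ co x' i1 ≠ 0 := by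
    by_contra h
    push_neg at h
    have hx'eq : x' = g ^ (i0 : ℕ) := by
      rw [hco x', Finset.sum_eq_single i0]
      · rw [hx'i0]; simp
      · intro b _ hb; rw [h b hb]; simp
      · intro hb; exact absurd (Finset.mem_univ i0) hb
    apply hI1
    apply TwoSidedIdeal.eq_top
    have h1 : (((gu ^ (i0 : ℕ))⁻¹ : Rˣ) : R) * x' ∈ I := I.mul_mem_left _ _ hx'I
    have h2 : (((gu ^ (i0 : ℕ))⁻¹ : Rˣ) : R) * x' = 1 := by
      rw [hx'eq, show (g : R) ^ (i0 : ℕ) = ((gu ^ (i0 : ℕ) : Rˣ) : R) from by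
        rw [Units.val_pow_eq_pow_val, hgu_val], Units.inv_mul]
    exact h2 ▸ h1
  -- turning a coefficient into a unit
  have mk_unit : ∀ (a : S) (ρ : S → S), Function.Surjective ρ → a ≠ 0 → σ a = a →
      (∀ t, t * a = a * ρ t) → ∃ u : Sˣ, (u : S) = a := by
    intro a ρ hρ ha0 haσ hra
    have haσ' : σ.symm a = a := by
      conv_lhs => rw [← haσ]
      exact σ.symm_apply_apply a
    have h1 : ∃ b : S, 1 = b * a := by
      have hK0 : (0 : S) ∈ {t : S | ∃ s, t = s * a} := ⟨0, (zero_mul a).symm⟩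
      have hKadd : ∀ {u v : S}, u ∈ {t : S | ∃ s, t = s * a} → v ∈ {t : S | ∃ s, t = s * a} →
          u + v ∈ {t : S | ∃ s, t = s * a} := by
        rintro u v ⟨s, rfl⟩ ⟨s', rfl⟩; exact ⟨s + s', (add_mul _ _ _).symm⟩
      have hKneg : ∀ {u : S}, u ∈ {t : S | ∃ s, t = s * a} → -u ∈ {t : S | ∃ s, t = s * a} := by
        rintro u ⟨s, rfl⟩; exact ⟨-s, (neg_mul _ _).symm⟩
      have hKleft : ∀ {v u : S}, u ∈ {t : S | ∃ s, t = s * a} →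
          v * u ∈ {t : S | ∃ s, t = s * a} := by
        rintro v u ⟨s, rfl⟩; exact ⟨v * s, (mul_assoc _ _ _).symm⟩
      have hKright : ∀ {u v : S}, u ∈ {t : S | ∃ s, t = s * a} →
          u * v ∈ {t : S | ∃ s, t = s * a} := by
        rintro u v ⟨s, rfl⟩
        obtain ⟨v', hv'⟩ := hρ v
        refine ⟨s * v', ?_⟩
        rw [mul_assoc, mul_assoc, ← hv', ← hra v']
      set K : TwoSidedIdeal S := TwoSidedIdeal.mk' _ hK0 hKadd hKneg hKleft hKright with hK
      have hKmem : ∀ u : S, u ∈ K ↔ ∃ s, u = s * a := fun u =>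
        TwoSidedIdeal.mem_mk' _ hK0 hKadd hKneg hKleft hKright u
      have hKinv : ∀ u : S, u ∈ K ↔ σ u ∈ K := by
        intro u
        rw [hKmem, hKmem]
        constructor
        · rintro ⟨s, rfl⟩
          exact ⟨σ s, by rw [map_mul, haσ]⟩
        · rintro ⟨s, hs⟩
          refine ⟨σ.symm s, ?_⟩
          have := congrArg σ.symm hs
          rw [σ.symm_apply_apply, map_mul, haσ'] at this
          exact this
      rcases hsimple K hKinv with h | h
      · exfalso
        have : a ∈ K := (hKmem a).2 ⟨1, (one_mul a).symm⟩
        rw [h, TwoSidedIdeal.mem_bot] at this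
        exact ha0 this
      · have : (1 : S) ∈ K := by rw [h]; exact TwoSidedIdeal.mem_top _
        exact (hKmem 1).1 this
    have h2 : ∃ b : S, 1 = a * b := by
      have hK0 : (0 : S) ∈ {t : S | ∃ s, t = a * s} := ⟨0, (mul_zero a).symm⟩
      have hKadd : ∀ {u v : S}, u ∈ {t : S | ∃ s, t = a * s} → v ∈ {t : S | ∃ s, t = a * s} →
          u + v ∈ {t : S | ∃ s, t = a * s} := by
        rintro u v ⟨s, rfl⟩ ⟨s', rfl⟩; exact ⟨s + s', (mul_add _ _ _).symm⟩
      have hKneg : ∀ {u : S}, u ∈ {t : S | ∃ s, t = a * s} → -u ∈ {t : S | ∃ s, t = a * s} := by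
        rintro u ⟨s, rfl⟩; exact ⟨-s, (mul_neg _ _).symm⟩
      have hKleft : ∀ {v u : S}, u ∈ {t : S | ∃ s, t = a * s} →
          v * u ∈ {t : S | ∃ s, t = a * s} := by
        rintro v u ⟨s, rfl⟩
        refine ⟨ρ v * s, ?_⟩
        rw [← mul_assoc, ← mul_assoc, ← hra v]
      have hKright : ∀ {u v : S}, u ∈ {t : S | ∃ s, t = a * s} →
          u * v ∈ {t : S | ∃ s, t = a * s} := by
        rintro u v ⟨s, rfl⟩; exact ⟨s * v, mul_assoc _ _ _⟩
      set K : TwoSidedIdeal S := TwoSidedIdeal.mk' _ hK0 hKadd hKneg hKleft hKright with hK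
      have hKmem : ∀ u : S, u ∈ K ↔ ∃ s, u = a * s := fun u =>
        TwoSidedIdeal.mem_mk' _ hK0 hKadd hKneg hKleft hKright u
      have hKinv : ∀ u : S, u ∈ K ↔ σ u ∈ K := by
        intro u
        rw [hKmem, hKmem]
        constructor
        · rintro ⟨s, rfl⟩
          exact ⟨σ s, by rw [map_mul, haσ]⟩
        · rintro ⟨s, hs⟩
          refine ⟨σ.symm s, ?_⟩
          have := congrArg σ.symm hs
          rw [σ.symm_apply_apply, map_mul, haσ'] at this
          exact this
      rcases hsimple K hKinv with h | h
      · exfalso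
        have : a ∈ K := (hKmem a).2 ⟨1, (mul_one a).symm⟩
        rw [h, TwoSidedIdeal.mem_bot] at this
        exact ha0 this
      · have : (1 : S) ∈ K := by rw [h]; exact TwoSidedIdeal.mem_top _
        exact (hKmem 1).1 this
    obtain ⟨b, hb⟩ := h1
    obtain ⟨b', hb'⟩ := h2
    have hbb : b = b' := by
      rw [← mul_one b, hb', ← mul_assoc, ← hb, one_mul]
    exact ⟨⟨a, b, by rw [hbb, ← hb'], by rw [← hb]⟩, rfl⟩
  -- the conjugating unit for a power of σ
  obtain ⟨d, hd0, hdp, w₀, hw₀⟩ :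
      ∃ d, 0 < d ∧ d < p ∧ ∃ w : Sˣ, ∀ s : S, (⇑σ)^[d] s = ↑w * s * ↑w⁻¹ := by
    have hvalne : (i1 : ℕ) ≠ (i0 : ℕ) := fun h => hi1ne (Fin.ext h)
    rcases Nat.lt_or_ge (i0 : ℕ) (i1 : ℕ) with hlt | hge
    · refine ⟨(i1 : ℕ) - (i0 : ℕ), by omega, by omega, ?_⟩
      have hrel1 : ∀ t : S, t * co x' i1 = co x' i1 * (⇑σ)^[(i1 : ℕ) - (i0 : ℕ)] t := by
        intro t
        have h1 := hA ((⇑σ.symm)^[(i0 : ℕ)] t) i1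
        rw [hit_inv] at h1
        have h2 : (i1 : ℕ) = ((i1 : ℕ) - (i0 : ℕ)) + (i0 : ℕ) := by omega
        rw [h2, Function.iterate_add_apply, hit_inv] at h1
        exact h1
      obtain ⟨u, hu⟩ := mk_unit (co x' i1) _ (hit_surj _) hi1 (hB i1) hrel1
      refine ⟨u⁻¹, fun s => ?_⟩
      have h3 := hrel1 s
      rw [← hu] at h3
      calc (⇑σ)^[(i1 : ℕ) - (i0 : ℕ)] s
          = ↑u⁻¹ * (↑u * (⇑σ)^[(i1 : ℕ) - (i0 : ℕ)] s) := by
            rw [← mul_assoc, Units.inv_mul, one_mul]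
        _ = ↑u⁻¹ * (s * ↑u) := by rw [← h3]
        _ = ↑u⁻¹ * s * ↑u⁻¹⁻¹ := by rw [inv_inv, mul_assoc]
    · refine ⟨(i0 : ℕ) - (i1 : ℕ), by omega, by omega, ?_⟩
      have hrel2 : ∀ t : S, (⇑σ)^[(i0 : ℕ) - (i1 : ℕ)] t * co x' i1 = co x' i1 * t := by
        intro t
        have h1 := hA ((⇑σ.symm)^[(i1 : ℕ)] t) i1
        rw [hit_inv] at h1
        have h2 : (i0 : ℕ) = ((i0 : ℕ) - (i1 : ℕ)) + (i1 : ℕ) := by omega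
        rw [h2, Function.iterate_add_apply, hit_inv] at h1
        exact h1
      have hrel2' : ∀ t : S, t * co x' i1 = co x' i1 * (⇑σ.symm)^[(i0 : ℕ) - (i1 : ℕ)] t := by
        intro t
        have := hrel2 ((⇑σ.symm)^[(i0 : ℕ) - (i1 : ℕ)] t)
        rw [hit_inv] at this
        exact this
      obtain ⟨u, hu⟩ := mk_unit (co x' i1) _
        (Function.Surjective.iterate σ.symm.surjective _) hi1 (hB i1) hrel2'
      refine ⟨u, fun s => ?_⟩
      have h3 := hrel2 s
      rw [← hu] at h3
      calc (⇑σ)^[(i0 : ℕ) - (i1 : ℕ)] s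
          = (⇑σ)^[(i0 : ℕ) - (i1 : ℕ)] s * ↑u * ↑u⁻¹ := by
            rw [mul_assoc, Units.mul_inv, mul_one]
        _ = ↑u * s * ↑u⁻¹ := by rw [h3]
  -- iterated conjugation
  have conj_pow : ∀ (e : ℕ) (w : Sˣ), (∀ s : S, (⇑σ)^[e] s = ↑w * s * ↑w⁻¹) →
      ∀ (n : ℕ) (s : S), (⇑σ)^[n * e] s = ↑(w ^ n) * s * ↑(w ^ n)⁻¹ := by
    intro e w hw n
    induction n with
    | zero => intro s; simp
    | succ n ih =>
      intro s
      have h1 : (n + 1) * e = e + n * e := by ring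
      rw [h1, Function.iterate_add_apply, ih s, hw]
      simp [pow_succ', mul_inv_rev, Units.val_mul, mul_assoc]
  -- Bezout
  obtain ⟨k, m, hkm⟩ : ∃ k m : ℕ, k * d = 1 + m * p := by
    haveI : Fact p.Prime := ⟨hp⟩
    have hd' : (d : ZMod p) ≠ 0 := by
      rw [Ne, ZMod.natCast_eq_zero_iff]
      intro hdvd
      have := Nat.le_of_dvd hd0 hdvd
      omega
    set k := ((d : ZMod p)⁻¹).val with hk
    have h1 : ((k * d : ℕ) : ZMod p) = ((1 : ℕ) : ZMod p) := by
      push_cast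
      rw [hk, ZMod.natCast_zmod_val, inv_mul_cancel₀ hd']
    have h2 : (k * d) % p = 1 % p := (ZMod.natCast_eq_natCast_iff _ _ _).mp h1
    have h3 : 1 % p = 1 := Nat.mod_eq_of_lt (by omega)
    have h4 := Nat.div_add_mod (k * d) p
    refine ⟨k, (k * d) / p, ?_⟩
    have h5 : (k * d) % p = 1 := by rw [h2, h3]
    calc k * d = p * (k * d / p) + k * d % p := h4.symm
      _ = 1 + k * d / p * p := by rw [h5]; ring
  obtain ⟨α, hα⟩ := hinner
  have h1 := conj_pow d w₀ hw₀ k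
  have h2 := conj_pow p α hα m
  have h3 : ∀ s : S, σ (↑(α ^ m) * s * ↑(α ^ m)⁻¹) = ↑(w₀ ^ k) * s * ↑(w₀ ^ k)⁻¹ := by
    intro s
    have h5 := h1 s
    rw [hkm, Function.iterate_add_apply, h2 s] at h5
    simpa using h5
  have hconj : ∀ s : S, σ s = ↑(w₀ ^ k * (α ^ m)⁻¹) * s * ↑(w₀ ^ k * (α ^ m)⁻¹)⁻¹ := by
    intro s
    have h6 := h3 (↑(α ^ m)⁻¹ * s * ↑(α ^ m))
    have h7 : ↑(α ^ m) * (↑(α ^ m)⁻¹ * s * ↑(α ^ m)) * ↑(α ^ m)⁻¹ = s := by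
      simp only [mul_assoc, Units.mul_inv, Units.mul_inv_cancel_left, mul_one]
    rw [h7] at h6
    rw [h6]
    simp [Units.val_mul, mul_inv_rev, mul_assoc]
  refine ⟨w₀ ^ k * (α ^ m)⁻¹, ?_, hconj⟩
  rw [hconj]
  exact Units.mul_inv_cancel_right _ _
end

section
/- Let D be a discrete valuation ring in the sense: a Noetherian domain, not a division ring, such that for every nonzero x in its quotient division ring Q(D), either x ∈ D or x^{-1} ∈ D. Then D is local, its Jacobson radical is J(D) = πD for some normal element π, every nonzero left or right ideal of D equals π^n D for some n ≥ 0, and ∩_{n∈ℕ} π^n D = 0. -/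
/-- Properties of (noncommutative) discrete valuation rings: let `D` be a
Noetherian domain, not a division ring, with division ring of fractions `F`
(every element of `F` is a left and a right fraction over `D`), such that for
every nonzero `x ∈ F` either `x ∈ D` or `x⁻¹ ∈ D`.  Then `D` is local,
`J(D) = πD` for a normal element `π` (the nonunits are exactly `πD`), every
nonzero left or right ideal equals `πⁿD` for some `n`, and `∩ₙ πⁿD = 0`. -/
theorem stmt_17 {D : Type*} [Ring D] [IsDomain D] [IsNoetherianRing D]
    (hnotdiv : ∃ x : D, x ≠ 0 ∧ ¬IsUnit x)
    {F : Type*} [DivisionRing F] (φ : D →+* F) (hinj : Function.Injective φ)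
    -- F is the (Goldie) division ring of fractions of D
    (hfrac₁ : ∀ x : F, ∃ a b : D, b ≠ 0 ∧ x * φ b = φ a)
    (hfrac₂ : ∀ x : F, ∃ a b : D, b ≠ 0 ∧ φ b * x = φ a)
    -- for every nonzero x ∈ F, x ∈ D or x⁻¹ ∈ D
    (hdvr : ∀ x : F, x ≠ 0 → (∃ d : D, φ d = x) ∨ (∃ d : D, φ d = x⁻¹)) :
    IsLocalRing D ∧
    ∃ π : D,
      -- π is normal: πD = Dπ
      (∀ d : D, ∃ d' : D, π * d = d' * π) ∧
      (∀ d : D, ∃ d' : D, d * π = π * d') ∧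
      -- the Jacobson radical (= the nonunits, as D is local) is πD
      (∀ x : D, ¬IsUnit x ↔ ∃ d : D, x = π * d) ∧
      -- every nonzero left ideal is πⁿD
      (∀ I : Ideal D, I ≠ ⊥ →
        ∃ n : ℕ, (I : Set D) = {x : D | ∃ d : D, x = π ^ n * d}) ∧
      -- every nonzero right ideal is πⁿD
      (∀ I : AddSubgroup D, (∀ a ∈ I, ∀ d : D, a * d ∈ I) → I ≠ ⊥ →
        ∃ n : ℕ, (I : Set D) = {x : D | ∃ d : D, x = π ^ n * d}) ∧
      -- ∩ₙ πⁿD = 0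
      (∀ x : D, (∀ n : ℕ, ∃ d : D, x = π ^ n * d) → x = 0) := by
  classical
  have hphi0 : ∀ a : D, a ≠ 0 → φ a ≠ 0 := by
    intro a ha h0
    exact ha (hinj (by rw [h0, map_zero]))
  -- one-sided inverses are two-sided
  have hcomm1 : ∀ x y : D, x * y = 1 → y * x = 1 := by
    intro x y h
    apply hinj
    have h1 : φ x * φ y = 1 := by rw [← map_mul, h, map_one]
    have hx0 : φ x ≠ 0 := by
      intro h0; rw [h0, zero_mul] at h1; exact one_ne_zero h1.symm
    have hy : φ y = (φ x)⁻¹ := eq_inv_of_mul_eq_one_right h1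
    rw [map_mul, map_one, hy, inv_mul_cancel₀ hx0]
  have hunit_r : ∀ x y : D, x * y = 1 → IsUnit x := by
    intro x y h; exact ⟨⟨x, y, h, hcomm1 x y h⟩, rfl⟩
  have hunit_l : ∀ x y : D, y * x = 1 → IsUnit x := by
    intro x y h; exact ⟨⟨x, y, hcomm1 y x h, h⟩, rfl⟩
  -- left divisibility is total
  have hLD : ∀ a b : D, a ≠ 0 → b ≠ 0 → (∃ d, a = d * b) ∨ (∃ d, b = d * a) := by
    intro a b ha hb
    have hb0 := hphi0 b hb
    have hx : φ a * (φ b)⁻¹ ≠ 0 := mul_ne_zero (hphi0 a ha) (inv_ne_zero hb0)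
    rcases hdvr _ hx with ⟨d, hd⟩ | ⟨d, hd⟩
    · left; refine ⟨d, hinj ?_⟩
      rw [map_mul, hd, mul_assoc, inv_mul_cancel₀ hb0, mul_one]
    · right; refine ⟨d, hinj ?_⟩
      rw [mul_inv_rev, inv_inv] at hd
      have ha0 := hphi0 a ha
      rw [map_mul, hd, mul_assoc, inv_mul_cancel₀ ha0, mul_one]
  -- right divisibility is total
  have hRD : ∀ a b : D, a ≠ 0 → b ≠ 0 → (∃ d, a = b * d) ∨ (∃ d, b = a * d) := by
    intro a b ha hb
    have hb0 := hphi0 b hb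
    have hx : (φ b)⁻¹ * φ a ≠ 0 := mul_ne_zero (inv_ne_zero hb0) (hphi0 a ha)
    rcases hdvr _ hx with ⟨d, hd⟩ | ⟨d, hd⟩
    · left; refine ⟨d, hinj ?_⟩
      rw [map_mul, hd, ← mul_assoc, mul_inv_cancel₀ hb0, one_mul]
    · right; refine ⟨d, hinj ?_⟩
      rw [mul_inv_rev, inv_inv] at hd
      have ha0 := hphi0 a ha
      rw [map_mul, hd, ← mul_assoc, mul_inv_cancel₀ ha0, one_mul]
  -- nonunits are closed under left/right multiplication
  have hmulL : ∀ (d x : D), ¬IsUnit x → ¬IsUnit (d * x) := by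
    intro d x hx h
    rcases h with ⟨u, hu⟩
    have h2 : (↑u⁻¹ * d) * x = 1 := by
      rw [mul_assoc, ← hu]; exact u.inv_mul
    exact hx (hunit_l x _ h2)
  have hmulR : ∀ (d x : D), ¬IsUnit x → ¬IsUnit (x * d) := by
    intro d x hx h
    rcases h with ⟨u, hu⟩
    have h2 : x * (d * ↑u⁻¹) = 1 := by
      rw [← mul_assoc, ← hu]; exact u.mul_inv
    exact hx (hunit_r x _ h2)
  -- nonunits closed under addition; local
  have haddN : ∀ a b : D, a ∈ nonunits D → b ∈ nonunits D → a + b ∈ nonunits D := by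
    intro a b ha hb
    rw [mem_nonunits_iff] at ha hb ⊢
    by_cases ha0 : a = 0
    · simpa [ha0] using hb
    by_cases hb0 : b = 0
    · simpa [hb0] using ha
    rcases hLD a b ha0 hb0 with ⟨d, hd⟩ | ⟨d, hd⟩
    · have h2 : a + b = (d + 1) * b := by rw [add_mul, one_mul, hd]
      rw [h2]; exact hmulL _ _ hb
    · have h2 : a + b = (1 + d) * a := by rw [add_mul, one_mul, hd]
      rw [h2]; exact hmulL _ _ ha
  have hloc : IsLocalRing D :=
    ⟨fun {a b} hab =>
      or_iff_not_and_not.2 fun H => haddN a b H.1 H.2 (hab.symm ▸ isUnit_one)⟩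
  -- choose π with Dπ maximal among principal left ideals on nonzero nonunits
  obtain ⟨Im, ⟨π, hπ0, hπu, hIm⟩, hmax⟩ :=
    (set_has_maximal_iff_noetherian.mpr (inferInstance : IsNoetherian D D))
      {I : Ideal D | ∃ v : D, v ≠ 0 ∧ ¬IsUnit v ∧ I = Ideal.span {v}}
      ⟨Ideal.span {hnotdiv.choose}, hnotdiv.choose, hnotdiv.choose_spec.1,
        hnotdiv.choose_spec.2, rfl⟩
  subst hIm
  -- every nonunit is a left multiple of π
  have hM1 : ∀ x : D, ¬IsUnit x → ∃ c : D, x = c * π := by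
    intro x hx
    by_cases hx0 : x = 0
    · exact ⟨0, by rw [hx0, zero_mul]⟩
    rcases hLD x π hx0 hπ0 with ⟨d, hd⟩ | ⟨d, hd⟩
    · exact ⟨d, hd⟩
    · have hle : Ideal.span {π} ≤ Ideal.span {x} := by
        rw [Ideal.span_le, Set.singleton_subset_iff, hd]
        exact Ideal.mul_mem_left _ d (Ideal.subset_span rfl)
      have heq := eq_of_le_of_not_lt hle (hmax (Ideal.span {x}) ⟨x, hx0, hx, rfl⟩)
      have hmem : x ∈ Ideal.span ({π} : Set D) := by
        rw [heq]; exact Ideal.subset_span rfl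
      rcases Submodule.mem_span_singleton.mp hmem with ⟨c, hc⟩
      exact ⟨c, by rw [← hc, smul_eq_mul]⟩
  -- πD ⊆ Dπ
  have h7 : ∀ d : D, ∃ d' : D, π * d = d' * π :=
    fun d => hM1 (π * d) (hmulR d π hπu)
  -- Dπ ⊆ πD
  have h8 : ∀ d : D, ∃ d' : D, d * π = π * d' := by
    intro d
    by_cases hd0 : d = 0
    · exact ⟨0, by rw [hd0, zero_mul, mul_zero]⟩
    have hdπ0 : d * π ≠ 0 := mul_ne_zero hd0 hπ0
    rcases hRD (d * π) π hdπ0 hπ0 with ⟨e, he⟩ | ⟨e, he⟩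
    · exact ⟨e, he⟩
    · by_cases heu : IsUnit e
      · rcases heu with ⟨u, hu⟩
        refine ⟨↑u⁻¹, ?_⟩
        have h2 : π * ↑u⁻¹ = d * π := by
          conv_lhs => rw [he]
          rw [mul_assoc, ← hu, Units.mul_inv, mul_one]
        exact h2.symm
      · rcases hM1 e heu with ⟨c, hc⟩
        exfalso
        have h1 : d * (π * c) * π = 1 * π := by
          conv_rhs => rw [one_mul, he, hc]
          simp [mul_assoc]
        have h2 : d * (π * c) = 1 := mul_right_cancel₀ hπ0 h1
        exact hmulR c π hπu (hunit_l (π * c) d h2)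
  -- nonunit ↔ right multiple of π
  have hM : ∀ x : D, ¬IsUnit x ↔ ∃ d : D, x = π * d := by
    intro x
    constructor
    · intro hx
      rcases hM1 x hx with ⟨c, hc⟩
      rcases h8 c with ⟨d', hd'⟩
      exact ⟨d', by rw [hc, hd']⟩
    · rintro ⟨d, rfl⟩
      exact hmulR d π hπu
  -- iterated normality
  have h7n : ∀ (n : ℕ) (d : D), ∃ d' : D, π ^ n * d = d' * π ^ n := by
    intro n
    induction n with
    | zero => intro d; exact ⟨d, by simp⟩
    | succ n ih =>
      intro d
      rcases ih d with ⟨e, he⟩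
      rcases h7 e with ⟨f, hf⟩
      exact ⟨f, by rw [pow_succ', mul_assoc, he, ← mul_assoc, hf, mul_assoc, ← pow_succ']⟩
  have h8n : ∀ (n : ℕ) (d : D), ∃ d' : D, d * π ^ n = π ^ n * d' := by
    intro n
    induction n with
    | zero => intro d; exact ⟨d, by simp⟩
    | succ n ih =>
      intro d
      rcases ih d with ⟨e, he⟩
      rcases h8 e with ⟨f, hf⟩
      exact ⟨f, by rw [pow_succ, ← mul_assoc, he, mul_assoc, hf, ← mul_assoc, ← pow_succ]⟩
  -- every nonzero element is π^n times a unit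
  have hval : ∀ x : D, x ≠ 0 → ∃ (n : ℕ) (u : D), IsUnit u ∧ x = π ^ n * u := by
    by_contra hc
    push_neg at hc
    obtain ⟨x₀, hx0, hbad⟩ := hc
    obtain ⟨J, ⟨y, hy0, hyb, hJ⟩, hmaxT⟩ :=
      (set_has_maximal_iff_noetherian.mpr (inferInstance : IsNoetherian D D))
        {I : Ideal D | ∃ x : D, x ≠ 0 ∧ (∀ (n : ℕ) (u : D), IsUnit u → x ≠ π ^ n * u) ∧
          I = Ideal.span {x}}
        ⟨Ideal.span {x₀}, x₀, hx0, hbad, rfl⟩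
    subst hJ
    have hyu : ¬IsUnit y := fun h => hyb 0 y h (by rw [pow_zero, one_mul])
    rcases (hM y).mp hyu with ⟨y₁, hy₁⟩
    have hy₁0 : y₁ ≠ 0 := by
      rintro rfl; rw [mul_zero] at hy₁; exact hy0 hy₁
    have hy₁b : ∀ (n : ℕ) (u : D), IsUnit u → y₁ ≠ π ^ n * u := by
      rintro n u hu rfl
      exact hyb (n + 1) u hu (by rw [hy₁, pow_succ', mul_assoc])
    have hle : Ideal.span {y} ≤ Ideal.span {y₁} := by
      rw [Ideal.span_le, Set.singleton_subset_iff, hy₁]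
      exact Ideal.mul_mem_left _ π (Ideal.subset_span rfl)
    have heq := eq_of_le_of_not_lt hle (hmaxT _ ⟨y₁, hy₁0, hy₁b, rfl⟩)
    have hmem : y₁ ∈ Ideal.span ({y} : Set D) := by
      rw [heq]; exact Ideal.subset_span rfl
    rcases Submodule.mem_span_singleton.mp hmem with ⟨c, hc⟩
    have h3 : (1 : D) * y₁ = (c * π) * y₁ := by
      rw [one_mul, mul_assoc, ← hy₁, ← smul_eq_mul, hc]
    have h4 : (1 : D) = c * π := mul_right_cancel₀ hy₁0 h3
    exact hπu (hunit_l π c h4.symm)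
  -- π^n * unit can be rewritten as unit * π^n
  have hval' : ∀ (n : ℕ) (u : D), IsUnit u → ∃ w : D, IsUnit w ∧ π ^ n * u = w * π ^ n := by
    intro n u hu
    rcases h7n n u with ⟨w, hw⟩
    refine ⟨w, ?_, hw⟩
    by_contra hwu
    rcases hM1 w hwu with ⟨c, hc⟩
    rcases h8n (n + 1) c with ⟨e, he⟩
    have h2 : π ^ n * u = π ^ n * (π * e) := by
      rw [hw, hc, mul_assoc, ← pow_succ', he, pow_succ, mul_assoc]
    have hu' : u = π * e := mul_left_cancel₀ (pow_ne_zero n hπ0) h2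
    exact ((hM u).mpr ⟨e, hu'⟩) hu
  refine ⟨hloc, π, h7, h8, hM, ?_, ?_, ?_⟩
  · -- left ideals
    intro I hI
    have hex : ∃ z ∈ I, z ≠ 0 := by
      by_contra h
      push_neg at h
      exact hI ((Submodule.eq_bot_iff I).mpr h)
    obtain ⟨z, hzI, hz0⟩ := hex
    have hP : ∃ n : ℕ, ∃ x ∈ I, x ≠ 0 ∧ ∃ u : D, IsUnit u ∧ x = π ^ n * u := by
      rcases hval z hz0 with ⟨n, u, hu, hz⟩
      exact ⟨n, z, hzI, hz0, u, hu, hz⟩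
    obtain ⟨x₀, hx₀I, hx₀0, u, hu, hx₀⟩ := Nat.find_spec hP
    refine ⟨Nat.find hP, ?_⟩
    ext y
    simp only [SetLike.mem_coe, Set.mem_setOf_eq]
    constructor
    · intro hyI
      by_cases hy0 : y = 0
      · exact ⟨0, by rw [hy0, mul_zero]⟩
      rcases hval y hy0 with ⟨m, v, hv, hy⟩
      have hnm : Nat.find hP ≤ m :=
        le_of_not_gt fun hlt => Nat.find_min hP hlt ⟨y, hyI, hy0, v, hv, hy⟩
      exact ⟨π ^ (m - Nat.find hP) * v,
        by rw [hy, ← mul_assoc, ← pow_add, Nat.add_sub_cancel' hnm]⟩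
    · rintro ⟨d, rfl⟩
      obtain ⟨w, hwu, hw⟩ := hval' (Nat.find hP) u hu
      rcases hwu with ⟨W, hW⟩
      have hπn : π ^ Nat.find hP ∈ I := by
        have h2 : π ^ Nat.find hP = ↑W⁻¹ * x₀ := by
          rw [hx₀, hw, ← hW, ← mul_assoc, W.inv_mul, one_mul]
        rw [h2]
        exact I.mul_mem_left _ hx₀I
      rcases h7n (Nat.find hP) d with ⟨d', hd'⟩
      rw [hd']
      exact I.mul_mem_left _ hπn
  · -- right ideals
    intro I hr hI
    have hex : ∃ z ∈ I, z ≠ 0 := by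
      by_contra h
      push_neg at h
      exact hI ((AddSubgroup.eq_bot_iff_forall I).mpr h)
    obtain ⟨z, hzI, hz0⟩ := hex
    have hP : ∃ n : ℕ, ∃ x ∈ I, x ≠ 0 ∧ ∃ u : D, IsUnit u ∧ x = π ^ n * u := by
      rcases hval z hz0 with ⟨n, u, hu, hz⟩
      exact ⟨n, z, hzI, hz0, u, hu, hz⟩
    obtain ⟨x₀, hx₀I, hx₀0, u, hu, hx₀⟩ := Nat.find_spec hP
    refine ⟨Nat.find hP, ?_⟩
    ext y
    simp only [SetLike.mem_coe, Set.mem_setOf_eq]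
    constructor
    · intro hyI
      by_cases hy0 : y = 0
      · exact ⟨0, by rw [hy0, mul_zero]⟩
      rcases hval y hy0 with ⟨m, v, hv, hy⟩
      have hnm : Nat.find hP ≤ m :=
        le_of_not_gt fun hlt => Nat.find_min hP hlt ⟨y, hyI, hy0, v, hv, hy⟩
      exact ⟨π ^ (m - Nat.find hP) * v,
        by rw [hy, ← mul_assoc, ← pow_add, Nat.add_sub_cancel' hnm]⟩
    · rintro ⟨d, rfl⟩
      rcases hu with ⟨U, hU⟩
      have hπn : π ^ Nat.find hP ∈ I := by
        have h2 : π ^ Nat.find hP = x₀ * ↑U⁻¹ := by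
          rw [hx₀, ← hU, mul_assoc, Units.mul_inv, mul_one]
        rw [h2]
        exact hr x₀ hx₀I _
      exact hr _ hπn d
  · -- intersection is zero
    intro x hx
    by_contra hx0
    rcases hval x hx0 with ⟨m, u, hu, hxe⟩
    rcases hx (m + 1) with ⟨d, hd⟩
    have h2 : π ^ m * u = π ^ m * (π * d) := by
      rw [← hxe, hd, pow_succ, mul_assoc]
    have hu' : u = π * d := mul_left_cancel₀ (pow_ne_zero m hπ0) h2
    exact ((hM u).mpr ⟨d, hu'⟩) hu
end

section
/- Let Q be a simple artinian ring, τ an automorphism of Q such that no positive power of τ is an inner automorphism of Q. Then every nonzero two-sided ideal I of the skew polynomial ring Q[y; τ] equals the ideal generated by y^n for some n ∈ ℕ. -/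
private lemma skew_pow18 {Q : Type*} [Ring Q] (τ : Q ≃+* Q) {R : Type*} [Ring R]
    (ι : Q →+* R) (y : R) (hrel : ∀ q : Q, y * ι q = ι (τ q) * y) :
    ∀ (k : ℕ) (b : Q), y ^ k * ι b = ι ((⇑τ)^[k] b) * y ^ k := by
  intro k
  induction k with
  | zero => intro b; simp
  | succ k ih =>
    intro b
    rw [pow_succ, mul_assoc, hrel, ← mul_assoc, ih, mul_assoc, ← pow_succ,
      Function.iterate_succ_apply]

/-- Let `Q` be simple artinian and `τ ∈ Aut(Q)` with no positive power of `τ`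
inner.  Then every nonzero two-sided ideal of the skew polynomial ring
`R = Q[y; τ]` (axiomatised: `R ⊇ Q` free as a left `Q`-module on the powers of
`y`, with `y q = τ(q) y`) is the two-sided ideal generated by `yⁿ` for some
`n ∈ ℕ`. -/
theorem stmt_18 {Q : Type*} [Ring Q] [IsSimpleRing Q] [IsArtinianRing Q]
    (τ : Q ≃+* Q)
    (houter : ∀ n : ℕ, 0 < n → ¬ ∃ v : Qˣ, ∀ q : Q, (⇑τ)^[n] q = ↑v * q * ↑v⁻¹)
    {R : Type*} [Ring R] (ι : Q →+* R) (hinj : Function.Injective ι) (y : R)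
    -- skew polynomial relation
    (hrel : ∀ q : Q, y * ι q = ι (τ q) * y)
    -- R is a free left Q-module with basis the powers of y
    (hbasis : ∀ r : R, ∃! co : ℕ →₀ Q, r = co.sum fun n q => ι q * y ^ n) :
    ∀ I : TwoSidedIdeal R, I ≠ ⊥ →
      ∃ n : ℕ, I = TwoSidedIdeal.span {y ^ n} := by
  classical
  choose co hco hun using hbasis
  have hτs : ∀ (k : ℕ) (x : Q), (⇑τ)^[k] ((⇑τ.symm)^[k] x) = x := fun k x =>
    (Function.LeftInverse.iterate τ.apply_symm_apply k) x
  have hf0 : ∀ n : ℕ, ι (0 : Q) * y ^ n = 0 := by intro n; simp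
  have hcoid : ∀ c : ℕ →₀ Q, co (c.sum fun n q => ι q * y ^ n) = c :=
    fun c => (hun _ c rfl).symm
  have co_zero : co 0 = 0 := by
    have := hcoid 0
    rwa [Finsupp.sum_zero_index] at this
  have hzero : ∀ r : R, co r = 0 → r = 0 := by
    intro r hr
    rw [hco r, hr, Finsupp.sum_zero_index]
  have co_single : ∀ (n : ℕ) (q : Q), co (ι q * y ^ n) = Finsupp.single n q := by
    intro n q
    have : ι q * y ^ n = (Finsupp.single n q).sum fun n q => ι q * y ^ n := by
      rw [Finsupp.sum_single_index (hf0 n)]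
    rw [this, hcoid]
  have co_ypow : ∀ n : ℕ, co (y ^ n) = Finsupp.single n 1 := by
    intro n
    have := co_single n 1
    rwa [map_one, one_mul] at this
  have co_add : ∀ r s : R, co (r + s) = co r + co s := by
    intro r s
    have : r + s = (co r + co s).sum fun n q => ι q * y ^ n := by
      rw [Finsupp.sum_add_index' hf0 (by intro n a b; rw [map_add, add_mul])]
      rw [← hco r, ← hco s]
    rw [this, hcoid]
  have co_neg : ∀ r : R, co (-r) = -co r := by
    intro r
    have h2 : co (r + -r) = co r + co (-r) := co_add r (-r)
    rw [add_neg_cancel, co_zero] at h2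
    exact eq_neg_of_add_eq_zero_right h2.symm
  have co_sub : ∀ r s : R, co (r - s) = co r - co s := by
    intro r s
    rw [sub_eq_add_neg, co_add, co_neg, sub_eq_add_neg]
  -- left multiplication by ι a
  have co_lmul : ∀ (a : Q) (r : R),
      co (ι a * r) = (co r).mapRange (a * ·) (mul_zero a) := by
    intro a r
    have h1 : ι a * r = ((co r).mapRange (a * ·) (mul_zero a)).sum
        fun n q => ι q * y ^ n := by
      rw [Finsupp.sum_mapRange_index hf0]
      conv_lhs => rw [hco r]
      rw [Finsupp.mul_sum]
      exact Finsupp.sum_congr fun n _ => by rw [← mul_assoc, ← map_mul]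
    rw [h1, hcoid]
  have co_lmul_apply : ∀ (a : Q) (r : R) (k : ℕ), co (ι a * r) k = a * co r k := by
    intro a r k; rw [co_lmul]; rfl
  have co_lmul_supp : ∀ (a : Q) (r : R), (co (ι a * r)).support ⊆ (co r).support := by
    intro a r; rw [co_lmul]; exact Finsupp.support_mapRange
  -- right multiplication by ι b
  have co_rmul : ∀ (r : R) (b : Q),
      co (r * ι b) = Finsupp.onFinset (co r).support
        (fun k => co r k * (⇑τ)^[k] b)
        (fun k hk => Finsupp.mem_support_iff.mpr fun h0 => hk (by simp [h0])) := by
    intro r b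
    have h1 : r * ι b = (Finsupp.onFinset (co r).support
        (fun k => co r k * (⇑τ)^[k] b)
        (fun k hk => Finsupp.mem_support_iff.mpr fun h0 => hk (by simp [h0]))).sum
        fun n q => ι q * y ^ n := by
      rw [Finsupp.onFinset_sum _ (fun a => hf0 a)]
      conv_lhs => rw [hco r]
      rw [Finsupp.sum, Finset.sum_mul]
      refine Finset.sum_congr rfl fun n _ => ?_
      rw [mul_assoc, skew_pow18 τ ι y hrel n b, ← mul_assoc, ← map_mul]
    rw [h1, hcoid]
  have co_rmul_apply : ∀ (r : R) (b : Q) (k : ℕ),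
      co (r * ι b) k = co r k * (⇑τ)^[k] b := by
    intro r b k; rw [co_rmul]; rfl
  have co_rmul_supp : ∀ (r : R) (b : Q), (co (r * ι b)).support ⊆ (co r).support := by
    intro r b; rw [co_rmul]; exact Finsupp.support_onFinset_subset
  intro I hIbot
  have claim : ∀ s : ℕ, ∀ h : R, h ∈ I → h ≠ 0 → (co h).support.card ≤ s →
      ∃ m ∈ (co h).support, y ^ m ∈ I := by
    intro s
    induction s with
    | zero =>
      intro h hI hne0 hcard
      exact absurd (hzero h (Finsupp.support_eq_empty.mp
        (Finset.card_eq_zero.mp (Nat.le_zero.mp hcard)))) hne0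
    | succ s ih =>
      intro h hI hne0 hcard
      have hsupp : (co h).support.Nonempty :=
        Finsupp.support_nonempty_iff.mpr fun hc => hne0 (hzero h hc)
      set m := (co h).support.min' hsupp with hm
      have hmmem : m ∈ (co h).support := (co h).support.min'_mem hsupp
      have hcm : co h m ≠ 0 := Finsupp.mem_support_iff.mp hmmem
      -- The two-sided ideal of `Q` of m-th coefficients of elements of `I`
      -- supported inside the support of `h`.
      let K : TwoSidedIdeal Q := TwoSidedIdeal.mk'
        {a : Q | ∃ g, g ∈ I ∧ co g m = a ∧ (co g).support ⊆ (co h).support}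
        ⟨0, I.zero_mem, by simp [co_zero], by simp [co_zero]⟩
        (fun {a b} ha hb => by
          obtain ⟨g1, hg1, hc1, hs1⟩ := ha
          obtain ⟨g2, hg2, hc2, hs2⟩ := hb
          exact ⟨g1 + g2, I.add_mem hg1 hg2,
            by rw [co_add, Finsupp.add_apply, hc1, hc2],
            by rw [co_add]
               exact (Finsupp.support_add).trans (Finset.union_subset hs1 hs2)⟩)
        (fun {a} ha => by
          obtain ⟨g, hg, hc, hs⟩ := ha
          exact ⟨-g, I.neg_mem hg, by rw [co_neg, Finsupp.neg_apply, hc],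
            by rw [co_neg, Finsupp.support_neg]; exact hs⟩)
        (fun {x a} ha => by
          obtain ⟨g, hg, hc, hs⟩ := ha
          exact ⟨ι x * g, I.mul_mem_left _ _ hg, by rw [co_lmul_apply, hc],
            (co_lmul_supp x g).trans hs⟩)
        (fun {a x} ha => by
          obtain ⟨g, hg, hc, hs⟩ := ha
          exact ⟨g * ι ((⇑τ.symm)^[m] x), I.mul_mem_right _ _ hg,
            by rw [co_rmul_apply, hc, hτs], (co_rmul_supp _ _).trans hs⟩)
      have hcmem : co h m ∈ K := by
        rw [TwoSidedIdeal.mem_mk']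
        exact ⟨h, hI, rfl, subset_rfl⟩
      have h1K := IsSimpleRing.one_mem_of_ne_zero_mem K hcm hcmem
      rw [TwoSidedIdeal.mem_mk'] at h1K
      obtain ⟨g2, hg2I, hg2m, hg2s⟩ := h1K
      by_cases hall : ∀ q : Q, g2 * ι q - ι ((⇑τ)^[m] q) * g2 = 0
      · -- then g2 = y ^ m
        have hsingle : co g2 = Finsupp.single m 1 := by
          ext k
          rcases eq_or_ne k m with rfl | hkm
          · rw [hg2m, Finsupp.single_eq_same]
          · rw [Finsupp.single_eq_of_ne' (Ne.symm hkm)]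
            by_contra hck
            have hkmem : k ∈ (co g2).support := Finsupp.mem_support_iff.mpr hck
            have hkh : k ∈ (co h).support := hg2s hkmem
            have hmk : m < k :=
              lt_of_le_of_ne ((co h).support.min'_le k hkh) (Ne.symm hkm)
            set d := k - m with hd
            have hd0 : 0 < d := Nat.sub_pos_of_lt hmk
            set c := co g2 k with hcdef
            have hrelc : ∀ p : Q, c * (⇑τ)^[d] p = p * c := by
              intro p
              have h0 := hall ((⇑τ.symm)^[m] p)
              have h1 := congrArg (fun r => co r k) h0
              rw [co_sub, Finsupp.sub_apply, co_rmul_apply, co_lmul_apply, co_zero] at h1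
              have e1 : (⇑τ)^[k] ((⇑τ.symm)^[m] p) = (⇑τ)^[d] p := by
                conv_lhs => rw [show k = d + m from by omega]
                rw [Function.iterate_add_apply, hτs]
              rw [e1, hτs] at h1
              exact sub_eq_zero.mp h1
            -- c is a unit
            have hrinv : ∃ p : Q, c * p = 1 := by
              let L : TwoSidedIdeal Q := TwoSidedIdeal.mk' {x : Q | ∃ p, x = c * p}
                ⟨0, by rw [mul_zero]⟩
                (fun {x1 x2} h1 h2 => by
                  obtain ⟨p1, e1⟩ := h1; obtain ⟨p2, e2⟩ := h2
                  exact ⟨p1 + p2, by rw [mul_add, ← e1, ← e2]⟩)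
                (fun {x1} h1 => by
                  obtain ⟨p, e⟩ := h1; exact ⟨-p, by rw [mul_neg, ← e]⟩)
                (fun {x1 x2} h1 => by
                  obtain ⟨p, e⟩ := h1
                  exact ⟨(⇑τ)^[d] x1 * p, by
                    rw [e, ← mul_assoc, ← hrelc x1, mul_assoc]⟩)
                (fun {x1 x2} h1 => by
                  obtain ⟨p, e⟩ := h1; exact ⟨p * x2, by rw [e, mul_assoc]⟩)
              have hcL : c ∈ L := by
                rw [TwoSidedIdeal.mem_mk']; exact ⟨1, by rw [mul_one]⟩
              have h1L := IsSimpleRing.one_mem_of_ne_zero_mem L hck hcL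
              rw [TwoSidedIdeal.mem_mk'] at h1L
              obtain ⟨p, e⟩ := h1L
              exact ⟨p, e.symm⟩
            have hlinv : ∃ p : Q, p * c = 1 := by
              let L : TwoSidedIdeal Q := TwoSidedIdeal.mk' {x : Q | ∃ p, x = p * c}
                ⟨0, by rw [zero_mul]⟩
                (fun {x1 x2} h1 h2 => by
                  obtain ⟨p1, e1⟩ := h1; obtain ⟨p2, e2⟩ := h2
                  exact ⟨p1 + p2, by rw [add_mul, ← e1, ← e2]⟩)
                (fun {x1} h1 => by
                  obtain ⟨p, e⟩ := h1; exact ⟨-p, by rw [neg_mul, ← e]⟩)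
                (fun {x1 x2} h1 => by
                  obtain ⟨p, e⟩ := h1; exact ⟨x1 * p, by rw [e, mul_assoc]⟩)
                (fun {x1 x2} h1 => by
                  obtain ⟨p, e⟩ := h1
                  exact ⟨p * (⇑τ.symm)^[d] x2, by
                    have := hrelc ((⇑τ.symm)^[d] x2)
                    rw [hτs] at this
                    rw [e, mul_assoc, this, ← mul_assoc]⟩)
              have hcL : c ∈ L := by
                rw [TwoSidedIdeal.mem_mk']; exact ⟨1, by rw [one_mul]⟩
              have h1L := IsSimpleRing.one_mem_of_ne_zero_mem L hck hcL
              rw [TwoSidedIdeal.mem_mk'] at h1L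
              obtain ⟨p, e⟩ := h1L
              exact ⟨p, e.symm⟩
            obtain ⟨q₀, hq₀⟩ := hrinv
            obtain ⟨p₀, hp₀⟩ := hlinv
            have hpq : p₀ = q₀ := by
              calc p₀ = p₀ * (c * q₀) := by rw [hq₀, mul_one]
              _ = (p₀ * c) * q₀ := by rw [mul_assoc]
              _ = q₀ := by rw [hp₀, one_mul]
            have hq₀c : q₀ * c = 1 := by rw [← hpq]; exact hp₀
            refine absurd ?_ (houter d hd0)
            refine ⟨(⟨c, q₀, hq₀, hq₀c⟩ : Qˣ)⁻¹, fun q => ?_⟩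
            show (⇑τ)^[d] q = q₀ * q * c
            have h3 : q₀ * c * (⇑τ)^[d] q = q₀ * (q * c) := by
              rw [mul_assoc, hrelc q]
            rw [hq₀c, one_mul] at h3
            exact h3.trans (mul_assoc _ _ _).symm
        have hg2 : g2 = y ^ m := by
          conv_lhs => rw [hco g2, hsingle]
          rw [Finsupp.sum_single_index (hf0 m), map_one, one_mul]
        exact ⟨m, hmmem, hg2 ▸ hg2I⟩
      · push_neg at hall
        obtain ⟨q, hq⟩ := hall
        set h' := g2 * ι q - ι ((⇑τ)^[m] q) * g2 with hh'
        have hh'I : h' ∈ I :=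
          I.sub_mem (I.mul_mem_right _ _ hg2I) (I.mul_mem_left _ _ hg2I)
        have hsub : (co h').support ⊆ (co h).support.erase m := by
          intro k hk
          have hk0 : co h' k ≠ 0 := Finsupp.mem_support_iff.mp hk
          rw [hh', co_sub, Finsupp.sub_apply, co_rmul_apply, co_lmul_apply] at hk0
          have hkm : k ≠ m := by
            rintro rfl
            rw [hg2m, one_mul, mul_one] at hk0
            exact hk0 (sub_self _)
          refine Finset.mem_erase.mpr ⟨hkm, hg2s (Finsupp.mem_support_iff.mpr ?_)⟩
          intro h0
          rw [h0, zero_mul, mul_zero] at hk0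
          exact hk0 (sub_self 0)
        have hcard' : (co h').support.card ≤ s := by
          have h1 := Finset.card_le_card hsub
          rw [Finset.card_erase_of_mem hmmem] at h1
          omega
        obtain ⟨m', hm'mem, hm'I⟩ := ih h' hh'I hq hcard'
        exact ⟨m', (Finset.erase_subset _ _) (hsub hm'mem), hm'I⟩
  have hex : ∃ n : ℕ, y ^ n ∈ I := by
    have hne : ∃ h : R, h ∈ I ∧ h ≠ 0 := by
      by_contra hc
      push_neg at hc
      exact hIbot (eq_bot_iff.mpr fun x hx => (TwoSidedIdeal.mem_bot (R := R)).mpr (hc x hx))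
    obtain ⟨h, hI', hne0⟩ := hne
    obtain ⟨m, _, hm⟩ := claim (co h).support.card h hI' hne0 le_rfl
    exact ⟨m, hm⟩
  have hyn : y ^ Nat.find hex ∈ I := Nat.find_spec hex
  set n := Nat.find hex with hn
  refine ⟨n, le_antisymm ?_ ?_⟩
  · -- I ≤ span {y ^ n}
    intro g hg
    have hlow : ∀ k, k < n → co g k = 0 := by
      by_contra hc
      push_neg at hc
      obtain ⟨j, hjn, hj0⟩ := hc
      set t := (co g).filter (fun k => n ≤ k) with ht
      have hts : (t.sum fun k q => ι q * y ^ k) ∈ I := by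
        rw [Finsupp.sum]
        refine sum_mem fun k hk => ?_
        have hkn : n ≤ k := by
          rw [ht, Finsupp.support_filter, Finset.mem_filter] at hk
          exact hk.2
        have e : ι (t k) * y ^ k = (ι (t k) * y ^ (k - n)) * y ^ n := by
          rw [mul_assoc, ← pow_add, Nat.sub_add_cancel hkn]
        rw [e]
        exact I.mul_mem_left _ _ hyn
      set g' := g - (t.sum fun k q => ι q * y ^ k) with hg'
      have hg'I : g' ∈ I := I.sub_mem hg hts
      have hcog' : co g' = co g - t := by rw [hg', co_sub, hcoid]
      have hg'j : co g' j ≠ 0 := by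
        rw [hcog', Finsupp.sub_apply, ht,
          Finsupp.filter_apply_neg _ _ (by omega : ¬ n ≤ j), sub_zero]
        exact hj0
      have hg'ne : g' ≠ 0 := fun h0 => hg'j (by rw [h0, co_zero]; rfl)
      obtain ⟨m, hmmem, hmI⟩ := claim (co g').support.card g' hg'I hg'ne le_rfl
      have hmn : m < n := by
        by_contra hge
        push_neg at hge
        have h0 : co g' m = 0 := by
          rw [hcog', Finsupp.sub_apply, ht, Finsupp.filter_apply_pos _ _ hge, sub_self]
        exact (Finsupp.mem_support_iff.mp hmmem) h0
      exact Nat.find_min hex hmn hmI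
    rw [hco g, Finsupp.sum]
    refine sum_mem fun k hk => ?_
    have hkn : n ≤ k := by
      by_contra hlt
      push_neg at hlt
      exact Finsupp.mem_support_iff.mp hk (hlow k hlt)
    have e : ι (co g k) * y ^ k = (ι (co g k) * y ^ (k - n)) * y ^ n := by
      rw [mul_assoc, ← pow_add, Nat.sub_add_cancel hkn]
    rw [e]
    exact TwoSidedIdeal.mul_mem_left _ _ _
      (TwoSidedIdeal.subset_span (Set.mem_singleton _))
  · intro x hx
    exact TwoSidedIdeal.mem_span_iff.mp hx I
      (by rintro z hz; rw [Set.mem_singleton_iff] at hz; rw [hz]; exact hyn)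
end

section
/- Let (S,w) be a complete filtered ring and (σ,δ) a commuting skew derivation on S such that σ(t) = t for some t ∈ S with δ(s) = t s − σ(s) t for all s, and suppose (σ,δ) is quasi-compatible with w so that the bounded skew power series ring S^+[[x;σ,δ]] exists. Then x commutes with t in S^+[[x;σ,δ]], and x − t is a normal element: (x − t)·f = σ(f)·(x − t) for every f = Σ s_i x^i ∈ S^+[[x;σ,δ]], where σ acts on coefficients. -/
/-- The sequence `s` converges to `L` with respect to the filtration `v`. -/
def VConvergesTo {T : Type*} [Ring T] (v : T → WithTop ℤ) (s : ℕ → T) (L : T) : Prop :=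
  ∀ k : ℤ, ∃ N : ℕ, ∀ n ≥ N, (k : WithTop ℤ) ≤ v (s n - L)

/-- In the bounded skew power series ring `T = S⁺[[x;σ,δ]]` over a complete
filtered ring `(S,w)` with quasi-compatible commuting skew derivation `(σ,δ)`,
where `δ(s) = t s − σ(s) t` and `σ(t) = t`:  `x` commutes with `t`, and `x − t`
is normal, with `(x − t)·f = σ(f)·(x − t)` for every bounded power series
`f = Σ sᵢ xⁱ` (where `σ` acts on coefficients). -/
theorem stmt_19 {S : Type*} [Ring S] (w : S → WithTop ℤ)
    -- (S,w) is a complete filtered ring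
    (hadd : ∀ a b : S, min (w a) (w b) ≤ w (a + b))
    (hsep : ∀ a : S, w a = ⊤ ↔ a = 0)
    (hone : w 1 = 0)
    (hmul : ∀ a b : S, w a + w b ≤ w (a * b))
    (hcomplete : ∀ s : ℕ → S,
      (∀ k : ℤ, ∃ N : ℕ, ∀ m ≥ N, ∀ n ≥ N, (k : WithTop ℤ) ≤ w (s m - s n)) →
      ∃ L : S, ∀ k : ℤ, ∃ N : ℕ, ∀ n ≥ N, (k : WithTop ℤ) ≤ w (s n - L))
    -- a commuting skew derivation (σ,δ)
    (σ : RingAut S) (δ : S → S)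
    (hleib : ∀ r s : S, δ (r * s) = δ r * s + σ r * δ s)
    (hδadd : ∀ r s : S, δ (r + s) = δ r + δ s)
    (hcommute : ∀ s : S, σ (δ s) = δ (σ s))
    -- δ is inner, given by t, with σ(t) = t
    (t : S) (ht : σ t = t) (hδ : ∀ s : S, δ s = t * s - σ s * t)
    -- quasi-compatibility of (σ,δ) with w
    (hbound : ∃ B : ℤ, ∀ (i : ℤ) (j : ℕ) (s : S),
      w s + (B : WithTop ℤ) ≤ w ((σ ^ i) (δ^[j] s)))
    (hnil : ∃ N : ℕ, ∀ s : S, w s + (1 : WithTop ℤ) ≤ w (δ^[N] s))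
    -- the bounded skew power series ring T = S⁺[[x;σ,δ]] with its
    -- (separated) topology v, in which S embeds and the defining relation
    -- x·s = σ(s)·x + δ(s) holds
    {T : Type*} [Ring T] (v : T → WithTop ℤ)
    (hvadd : ∀ a b : T, min (v a) (v b) ≤ v (a + b))
    (hvsep : ∀ a : T, v a = ⊤ ↔ a = 0)
    (ι : S →+* T) (hι : ∀ s : S, v (ι s) = w s)
    (x : T) (hx : ∀ s : S, x * ι s = ι (σ s) * x + ι (δ s))
    -- every element of T is a bounded power series Σ sᵢ xⁱ
    (hrepr : ∀ f : T, ∃ s : ℕ → S, (∃ M : ℤ, ∀ n, (M : WithTop ℤ) ≤ w (s n)) ∧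
      VConvergesTo v (fun n => ∑ i ∈ Finset.range n, ι (s i) * x ^ i) f)
    -- multiplication in T is continuous: left and right multiplication by a
    -- fixed element is a filtered map
    (hcont : ∀ a : T, ∃ c : ℤ, ∀ h : T,
      v h + (c : WithTop ℤ) ≤ v (a * h) ∧ v h + (c : WithTop ℤ) ≤ v (h * a)) :
    -- conclusion: x commutes with t, and x − t is normal
    x * ι t = ι t * x ∧
    ∀ (s : ℕ → S) (M : ℤ), (∀ n, (M : WithTop ℤ) ≤ w (s n)) →
      ∀ f g : T,
        VConvergesTo v (fun n => ∑ i ∈ Finset.range n, ι (s i) * x ^ i) f →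
        VConvergesTo v (fun n => ∑ i ∈ Finset.range n, ι (σ (s i)) * x ^ i) g →
        (x - ι t) * f = g * (x - ι t) := by
  -- x commutes with ι t
  have hδt : δ t = 0 := by rw [hδ, ht, sub_self]
  have hxt : x * ι t = ι t * x := by
    have h := hx t
    rw [ht, hδt, map_zero, add_zero] at h
    exact h
  refine ⟨hxt, ?_⟩
  -- ι t commutes with powers of x
  have hxk : ∀ i : ℕ, ι t * x ^ i = x ^ i * ι t := by
    intro i
    induction i with
    | zero => simp
    | succ n ih =>
      rw [pow_succ, ← mul_assoc, ih, mul_assoc, ← hxt, ← mul_assoc]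
  have hxmk : ∀ i : ℕ, (x - ι t) * x ^ i = x ^ i * (x - ι t) := by
    intro i
    rw [sub_mul, mul_sub, hxk i, ← pow_succ, ← pow_succ']
  -- key termwise identity
  have hterm : ∀ (a : S) (i : ℕ),
      (x - ι t) * (ι a * x ^ i) = ι (σ a) * x ^ i * (x - ι t) := by
    intro a i
    have h1 : (x - ι t) * ι a = ι (σ a) * (x - ι t) := by
      have h := hx a
      rw [hδ a, map_sub, map_mul, map_mul] at h
      rw [sub_mul, mul_sub, h]
      abel
    calc (x - ι t) * (ι a * x ^ i) = ((x - ι t) * ι a) * x ^ i := by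
          rw [mul_assoc]
      _ = ι (σ a) * ((x - ι t) * x ^ i) := by rw [h1, mul_assoc]
      _ = ι (σ a) * x ^ i * (x - ι t) := by rw [hxmk i, mul_assoc]
  intro s M hM f g hf hg
  -- partial sums identity
  have hsum : ∀ n : ℕ,
      (x - ι t) * (∑ i ∈ Finset.range n, ι (s i) * x ^ i)
        = (∑ i ∈ Finset.range n, ι (σ (s i)) * x ^ i) * (x - ι t) := by
    intro n
    rw [Finset.mul_sum, Finset.sum_mul]
    exact Finset.sum_congr rfl fun i _ => hterm (s i) i
  set P : ℕ → T := fun n => ∑ i ∈ Finset.range n, ι (s i) * x ^ i with hP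
  set Q : ℕ → T := fun n => ∑ i ∈ Finset.range n, ι (σ (s i)) * x ^ i with hQ
  set D : T := (x - ι t) * f - g * (x - ι t) with hD
  obtain ⟨c, hc⟩ := hcont (x - ι t)
  obtain ⟨c', hc'⟩ := hcont (-1 : T)
  have hneg : ∀ h : T, v h + (c' : WithTop ℤ) ≤ v (-h) := by
    intro h
    have := (hc' h).1
    rwa [neg_one_mul] at this
  -- v D ≥ k for all k
  have hDk : ∀ k : ℤ, (k : WithTop ℤ) ≤ v D := by
    intro k
    obtain ⟨N1, hN1⟩ := hf (k - c - c')
    obtain ⟨N2, hN2⟩ := hg (k - c)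
    set n := max N1 N2
    have hPQ : (x - ι t) * P n = Q n * (x - ι t) := hsum n
    have hDeq : D = (x - ι t) * (f - P n) + (Q n - g) * (x - ι t) := by
      rw [hD, mul_sub (x - ι t) f (P n), sub_mul (Q n) g (x - ι t), hPQ]
      abel
    have h1 : (k : WithTop ℤ) ≤ v ((x - ι t) * (f - P n)) := by
      have e1 : (((k - c - c' : ℤ)) : WithTop ℤ) ≤ v (P n - f) :=
        hN1 n (le_max_left _ _)
      have e2 : v (P n - f) + (c' : WithTop ℤ) ≤ v (f - P n) := by
        have := hneg (P n - f)
        rwa [neg_sub] at this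
      have e3 : v (f - P n) + (c : WithTop ℤ) ≤ v ((x - ι t) * (f - P n)) :=
        (hc (f - P n)).1
      calc (k : WithTop ℤ) = ((k - c - c' : ℤ) : WithTop ℤ) + (c' : WithTop ℤ)
              + (c : WithTop ℤ) := by
            rw [← WithTop.coe_add, ← WithTop.coe_add, WithTop.coe_inj]
            ring
        _ ≤ v (P n - f) + (c' : WithTop ℤ) + (c : WithTop ℤ) := by
            gcongr
        _ ≤ v (f - P n) + (c : WithTop ℤ) := by gcongr
        _ ≤ v ((x - ι t) * (f - P n)) := e3
    have h2 : (k : WithTop ℤ) ≤ v ((Q n - g) * (x - ι t)) := by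
      have e1 : (((k - c : ℤ)) : WithTop ℤ) ≤ v (Q n - g) :=
        hN2 n (le_max_right _ _)
      have e3 : v (Q n - g) + (c : WithTop ℤ) ≤ v ((Q n - g) * (x - ι t)) :=
        (hc (Q n - g)).2
      calc (k : WithTop ℤ) = ((k - c : ℤ) : WithTop ℤ) + (c : WithTop ℤ) := by
            rw [← WithTop.coe_add, WithTop.coe_inj]; ring
        _ ≤ v (Q n - g) + (c : WithTop ℤ) := by gcongr
        _ ≤ v ((Q n - g) * (x - ι t)) := e3
    calc (k : WithTop ℤ) ≤ min (v ((x - ι t) * (f - P n)))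
            (v ((Q n - g) * (x - ι t))) := le_min h1 h2
      _ ≤ v ((x - ι t) * (f - P n) + (Q n - g) * (x - ι t)) := hvadd _ _
      _ = v D := by rw [← hDeq]
  -- hence v D = ⊤ and D = 0
  have hDtop : v D = ⊤ := by
    by_contra h
    obtain ⟨m, hm⟩ := WithTop.ne_top_iff_exists.mp h
    have := hDk (m + 1)
    rw [← hm, WithTop.coe_le_coe] at this
    omega
  have := (hvsep D).mp hDtop
  rw [hD, sub_eq_zero] at this
  exact this
end
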